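/- arXiv:1208.3759 — 7 statements merged into one kernel-verified Lean document; each statement's English description precedes it below -/
import Mathlib

section
/- Let A and B be expanding 2×2 matrices with characteristic polynomials f(x) = x² + px + q and g(x) = x² − px + q respectively, with vectors v, w such that {v, Av} and {w, Bw} are linearly independent. Define α_i, β_i by A^{−i}v = α_i v + β_i Av, and α'_i, β'_i by B^{−i}w = α'_i w + β'_i Bw. Then α'_{2j} = α_{2j}, α'_{2j−1} = −α_{2j−1}, β'_{2j} = −β_{2j}, β'_{2j−1} = β_{2j−1} for all j ≥ 1. In particular ∑|α'_i| = ∑|α_i| and ∑|β'_i| = ∑|β_i| whenever these sums converge. -/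
open Matrix Polynomial

lemma auxCH (A : Matrix (Fin 2) (Fin 2) ℝ) (r s : ℝ)
    (hchar : A.charpoly = X ^ 2 + C r * X + C s) :
    A ^ 2 + r • A + s • 1 = 0 := by
  have h := A.aeval_self_charpoly
  rw [hchar] at h
  simpa [Algebra.algebraMap_eq_smul_one, map_add, _root_.map_mul, map_pow] using h

lemma auxInv (A : Matrix (Fin 2) (Fin 2) ℝ) (r s : ℝ) (hs : s ≠ 0)
    (hchar : A.charpoly = X ^ 2 + C r * X + C s) :
    A⁻¹ = (-(s⁻¹)) • (A + r • 1) := by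
  apply Matrix.inv_eq_right_inv
  have h := auxCH A r s hchar
  have h2 : A * ((-(s⁻¹)) • (A + r • 1)) = (-(s⁻¹)) • (A ^ 2 + r • A) := by
    rw [Matrix.mul_smul, Matrix.mul_add, Matrix.mul_smul, Matrix.mul_one, sq]
  rw [h2]
  have h3 : A ^ 2 + r • A = -(s • 1) := by
    have : A ^ 2 + r • A + s • 1 - s • 1 = 0 - s • 1 := by rw [h]
    simpa using this
  rw [h3, smul_neg, smul_smul]
  simp [inv_mul_cancel₀ hs]

lemma auxUniq (A : Matrix (Fin 2) (Fin 2) ℝ) (v : Fin 2 → ℝ)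
    (hv : LinearIndependent ℝ ![v, A *ᵥ v]) (a b c d : ℝ)
    (h : a • v + b • (A *ᵥ v) = c • v + d • (A *ᵥ v)) : a = c ∧ b = d := by
  rw [Fintype.linearIndependent_iff] at hv
  have h0 : (a - c) • v + (b - d) • (A *ᵥ v) = 0 := by
    have h' := sub_eq_zero.mpr h
    rw [sub_smul, sub_smul, ← h']
    abel
  have := hv ![a - c, b - d] (by simpa [Fin.sum_univ_two] using h0)
  have h1 := this 0
  have h2 := this 1
  simp at h1 h2
  constructor <;> linarith

lemma auxStep (A : Matrix (Fin 2) (Fin 2) ℝ) (r s : ℝ) (hs : s ≠ 0)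
    (hchar : A.charpoly = X ^ 2 + C r * X + C s)
    (v : Fin 2 → ℝ) (hv : LinearIndependent ℝ ![v, A *ᵥ v])
    (α β : ℕ → ℝ)
    (hαβ : ∀ i, 1 ≤ i → A⁻¹ ^ i *ᵥ v = α i • v + β i • (A *ᵥ v)) :
    (α 1 = -(r / s) ∧ β 1 = -(1 / s)) ∧
    ∀ i, 1 ≤ i → α (i + 1) = -(r / s) * α i + β i ∧ β (i + 1) = -(1 / s) * α i := by
  have hdet : A.det = s := by
    rw [Matrix.det_eq_sign_charpoly_coeff, hchar]
    simp [coeff_X_pow]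
  have hunit : IsUnit A.det := by rw [hdet]; exact isUnit_iff_ne_zero.mpr hs
  have hleft : A⁻¹ * A = 1 := Matrix.nonsing_inv_mul A hunit
  have hinv : A⁻¹ = (-(s⁻¹)) • (A + r • 1) := auxInv A r s hs hchar
  have hAv : A⁻¹ *ᵥ (A *ᵥ v) = v := by rw [Matrix.mulVec_mulVec, hleft, Matrix.one_mulVec]
  have hv1 : A⁻¹ *ᵥ v = (-(r / s)) • v + (-(1 / s)) • (A *ᵥ v) := by
    rw [hinv, Matrix.smul_mulVec, Matrix.add_mulVec, Matrix.smul_mulVec,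
      Matrix.one_mulVec, smul_add, smul_smul]
    rw [show -(r/s) = -s⁻¹ * r by ring, show -((1:ℝ)/s) = -s⁻¹ by ring]
    abel
  constructor
  · have h1 := hαβ 1 le_rfl
    rw [pow_one, hv1] at h1
    exact auxUniq A v hv _ _ _ _ h1.symm
  · intro i hi
    have h1 := hαβ i hi
    have h2 := hαβ (i + 1) (by omega)
    have hcalc : A⁻¹ ^ (i + 1) *ᵥ v
        = (-(r / s) * α i + β i) • v + (-(1 / s) * α i) • (A *ᵥ v) := by
      rw [pow_succ', ← Matrix.mulVec_mulVec, h1, Matrix.mulVec_add, Matrix.mulVec_smul,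
        Matrix.mulVec_smul, hv1, hAv, smul_add, smul_smul, smul_smul]
      module
    rw [hcalc] at h2
    exact auxUniq A v hv _ _ _ _ h2.symm


/-- All (complex) eigenvalues of `A` have modulus strictly larger than `1`. -/
def IsExpandingMat (A : Matrix (Fin 2) (Fin 2) ℝ) : Prop :=
  ∀ μ ∈ spectrum ℂ (A.map (algebraMap ℝ ℂ)), 1 < ‖μ‖

theorem stmt4 (A B : Matrix (Fin 2) (Fin 2) ℝ)
    (hexpA : IsExpandingMat A) (hexpB : IsExpandingMat B)
    (p q : ℤ) (hq : q ≠ 0)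
    (hcharA : A.charpoly = X ^ 2 + C (p : ℝ) * X + C (q : ℝ))
    (hcharB : B.charpoly = X ^ 2 - C (p : ℝ) * X + C (q : ℝ))
    (v w : Fin 2 → ℝ)
    (hv : LinearIndependent ℝ ![v, A *ᵥ v])
    (hw : LinearIndependent ℝ ![w, B *ᵥ w])
    (α β α' β' : ℕ → ℝ)
    (hαβ : ∀ i, 1 ≤ i → A⁻¹ ^ i *ᵥ v = α i • v + β i • (A *ᵥ v))
    (hαβ' : ∀ i, 1 ≤ i → B⁻¹ ^ i *ᵥ w = α' i • w + β' i • (B *ᵥ w)) :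
    (∀ j, 1 ≤ j →
        α' (2 * j) = α (2 * j) ∧ α' (2 * j - 1) = -α (2 * j - 1) ∧
        β' (2 * j) = -β (2 * j) ∧ β' (2 * j - 1) = β (2 * j - 1)) ∧
      (∀ S : ℝ, HasSum (fun i : ℕ => |α (i + 1)|) S ↔
        HasSum (fun i : ℕ => |α' (i + 1)|) S) ∧
      (∀ S : ℝ, HasSum (fun i : ℕ => |β (i + 1)|) S ↔
        HasSum (fun i : ℕ => |β' (i + 1)|) S) := by
  have hq' : (q : ℝ) ≠ 0 := Int.cast_ne_zero.mpr hq
  have hcharB' : B.charpoly = X ^ 2 + C (-(p : ℝ)) * X + C (q : ℝ) := by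
    rw [hcharB, map_neg, neg_mul, sub_eq_add_neg]
  obtain ⟨⟨ha1, hb1⟩, hrec⟩ := auxStep A (p : ℝ) (q : ℝ) hq' hcharA v hv α β hαβ
  obtain ⟨⟨ha1', hb1'⟩, hrec'⟩ := auxStep B (-(p : ℝ)) (q : ℝ) hq' hcharB' w hw α' β' hαβ'
  have key : ∀ i, 1 ≤ i → α' i = (-1) ^ i * α i ∧ β' i = (-1) ^ (i + 1) * β i := by
    intro i hi
    induction i, hi using Nat.le_induction with
    | base =>
      constructor
      · rw [ha1, ha1']; ring
      · rw [hb1, hb1']; ring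
    | succ n hn ih =>
      obtain ⟨ihα, ihβ⟩ := ih
      obtain ⟨hrα, hrβ⟩ := hrec n hn
      obtain ⟨hrα', hrβ'⟩ := hrec' n hn
      constructor
      · rw [hrα', hrα, ihα, ihβ]; ring
      · rw [hrβ', hrβ, ihα]; ring
  have hαabs : ∀ i : ℕ, |α' (i + 1)| = |α (i + 1)| := by
    intro i
    rw [(key (i + 1) (by omega)).1, abs_mul, abs_pow, abs_neg, abs_one, one_pow, one_mul]
  have hβabs : ∀ i : ℕ, |β' (i + 1)| = |β (i + 1)| := by
    intro i
    rw [(key (i + 1) (by omega)).2, abs_mul, abs_pow, abs_neg, abs_one, one_pow, one_mul]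
  refine ⟨?_, ?_, ?_⟩
  · intro j hj
    have h2j := key (2 * j) (by omega)
    have h2j1 := key (2 * j - 1) (by omega)
    have heven : (-1 : ℝ) ^ (2 * j) = 1 := Even.neg_one_pow ⟨j, by ring⟩
    have hodd : (-1 : ℝ) ^ (2 * j - 1) = -1 := Odd.neg_one_pow ⟨j - 1, by omega⟩
    have hodd2 : (-1 : ℝ) ^ (2 * j + 1) = -1 := Odd.neg_one_pow ⟨j, by ring⟩
    have heven2 : (-1 : ℝ) ^ (2 * j - 1 + 1) = 1 := Even.neg_one_pow ⟨j, by omega⟩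
    refine ⟨?_, ?_, ?_, ?_⟩
    · rw [h2j.1, heven, one_mul]
    · rw [h2j1.1, hodd, neg_one_mul]
    · rw [h2j.2, hodd2, neg_one_mul]
    · rw [h2j1.2, heven2, one_mul]
  · intro S
    rw [show (fun i : ℕ => |α' (i + 1)|) = fun i : ℕ => |α (i + 1)| from funext hαabs]
  · intro S
    rw [show (fun i : ℕ => |β' (i + 1)|) = fun i : ℕ => |β (i + 1)| from funext hβabs]
end

section
/- Let A be a 2×2 integer matrix with A² = −3I, k an integer with |k| > 1, and v a vector with {v, Av} linearly independent. Suppose (k_i), (l_i) are sequences with k_i Av + l_i v ∈ {0, ±v, ±(kAv − v), ±kAv} for all i, i.e. (k_i, l_i) ∈ {(0,0), (0,±1), (±k, ∓1), (±k, 0)}. If ∑_{i=1}^{∞} A^{−i}(k_i Av + l_i v) = L v + K Av with L, K ∈ ℝ, then |K| ≤ (1 + |k|)/2 < |k|. -/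
open Matrix

/-- `A` has integer entries. -/
def IsIntMat (A : Matrix (Fin 2) (Fin 2) ℝ) : Prop :=
  ∀ i j, ∃ m : ℤ, A i j = (m : ℝ)

/-! Since `A⁻¹ = -A / 3`, the powers of `A⁻¹` alternate between multiples of `A⁻¹` and of
the identity, so the `A v`-coordinate of the `i`-th term of the series is `(-1/3)^(j+1)` times
`l_{2j}` (for `i = 2j`) or `k_{2j+1}` (for `i = 2j+1`). Bounding the even and the odd terms by
geometric series gives `|K| ≤ 1/2 + |k|/2`. -/

theorem LinearIndependent.exists_dual_apply_eq_ite {ι K V : Type*} [DecidableEq ι] [Field K]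
    [AddCommGroup V] [Module K V] {v : ι → V} (hv : LinearIndependent K v) (j : ι) :
    ∃ φ : Module.Dual K V, ∀ i, φ (v i) = if i = j then 1 else 0 := by
  obtain ⟨φ, hφ⟩ := LinearMap.exists_extend ((Module.Basis.span hv).coord j)
  refine ⟨φ, fun i => ?_⟩
  have hφi := congr($hφ (Module.Basis.span hv i))
  rwa [LinearMap.comp_apply, Module.Basis.coord_apply, Module.Basis.repr_self,
    Module.Basis.span_apply, Submodule.subtype_apply, Finsupp.single_apply] at hφi

theorem HasSum.norm_le_of_bounded_even_odd {E : Type*} [NormedAddCommGroup E]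
    [CompleteSpace E] {f : ℕ → E} {a : E} {g h : ℕ → ℝ} {b c : ℝ} (hf : HasSum f a)
    (hg : HasSum g b) (hh : HasSum h c) (h0 : ∀ j, ‖f (2 * j)‖ ≤ g j)
    (h1 : ∀ j, ‖f (2 * j + 1)‖ ≤ h j) :
    ‖a‖ ≤ b + c := by
  obtain ⟨a₀, ha₀⟩ := Summable.of_norm_bounded hg.summable h0
  obtain ⟨a₁, ha₁⟩ := Summable.of_norm_bounded hh.summable h1
  rw [hf.unique (ha₀.even_add_odd ha₁)]
  exact (norm_add_le _ _).trans
    (add_le_add (ha₀.norm_le_of_bounded hg h0) (ha₁.norm_le_of_bounded hh h1))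

theorem hasSum_inv_three_pow_succ : HasSum (fun j : ℕ => (3⁻¹ : ℝ) ^ (j + 1)) 2⁻¹ := by
  have := (hasSum_geometric_of_lt_one (r := (3⁻¹ : ℝ)) (by norm_num) (by norm_num)).mul_left
    3⁻¹
  rw [show (2⁻¹ : ℝ) = 3⁻¹ * (1 - 3⁻¹)⁻¹ by norm_num]
  simpa only [pow_succ'] using this

section SquareScalar

variable {M N : Type*} [Monoid M] [Monoid N] [MulAction M N] [IsScalarTower M N N]
  [SMulCommClass M N N] {b : N} {μ : M}

theorem pow_two_mul_of_mul_self_eq_smul_one (h : b * b = μ • 1) (j : ℕ) :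
    b ^ (2 * j) = μ ^ j • 1 := by
  rw [pow_mul, sq, h, smul_pow, one_pow]

theorem pow_two_mul_add_one_of_mul_self_eq_smul_one (h : b * b = μ • 1) (j : ℕ) :
    b ^ (2 * j + 1) = μ ^ j • b := by
  rw [pow_succ, pow_two_mul_of_mul_self_eq_smul_one h, smul_one_mul]

end SquareScalar

namespace Matrix

variable {n 𝕜 : Type*} [Fintype n] [DecidableEq n] [Field 𝕜] {A : Matrix n n 𝕜} {c : 𝕜}

theorem inv_eq_inv_smul_of_mul_self_eq_smul_one (hc : c ≠ 0) (h : A * A = c • 1) :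
    A⁻¹ = c⁻¹ • A :=
  inv_eq_right_inv (by rw [Matrix.mul_smul, h, smul_smul, inv_mul_cancel₀ hc, one_smul])

theorem inv_mul_inv_of_mul_self_eq_smul_one (hc : c ≠ 0) (h : A * A = c • 1) :
    A⁻¹ * A⁻¹ = c⁻¹ • 1 := by
  rw [inv_eq_inv_smul_of_mul_self_eq_smul_one hc h, smul_mul_smul_comm, h, smul_smul]
  field_simp

theorem inv_pow_two_mul_add_one_mulVec_of_mul_self_eq_smul_one (hc : c ≠ 0)
    (h : A * A = c • 1) (v : n → 𝕜) (x y : 𝕜) (j : ℕ) :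
    A⁻¹ ^ (2 * j + 1) *ᵥ (x • (A *ᵥ v) + y • v) =
      c⁻¹ ^ j • (x • v + (c⁻¹ * y) • (A *ᵥ v)) := by
  rw [pow_two_mul_add_one_of_mul_self_eq_smul_one (inv_mul_inv_of_mul_self_eq_smul_one hc h),
    inv_eq_inv_smul_of_mul_self_eq_smul_one hc h, smul_mulVec, smul_mulVec, mulVec_add,
    mulVec_smul, mulVec_smul, mulVec_mulVec, h, smul_mulVec, one_mulVec]
  match_scalars <;> field_simp

theorem inv_pow_two_mul_mulVec_of_mul_self_eq_smul_one (hc : c ≠ 0) (h : A * A = c • 1)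
    (w : n → 𝕜) (j : ℕ) :
    A⁻¹ ^ (2 * j) *ᵥ w = c⁻¹ ^ j • w := by
  rw [pow_two_mul_of_mul_self_eq_smul_one (inv_mul_inv_of_mul_self_eq_smul_one hc h),
    smul_mulVec, one_mulVec]

variable {v : n → 𝕜} {φ : Module.Dual 𝕜 (n → 𝕜)}

theorem apply_inv_pow_two_mul_add_one_mulVec (hc : c ≠ 0) (h : A * A = c • 1) (hφv : φ v = 0)
    (hφAv : φ (A *ᵥ v) = 1) (x y : 𝕜) (j : ℕ) :
    φ (A⁻¹ ^ (2 * j + 1) *ᵥ (x • (A *ᵥ v) + y • v)) = c⁻¹ ^ (j + 1) * y := by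
  rw [inv_pow_two_mul_add_one_mulVec_of_mul_self_eq_smul_one hc h]
  simp only [map_smul, map_add, hφv, hφAv, smul_eq_mul, mul_zero, mul_one, zero_add]
  ring

theorem apply_inv_pow_two_mul_add_two_mulVec (hc : c ≠ 0) (h : A * A = c • 1) (hφv : φ v = 0)
    (hφAv : φ (A *ᵥ v) = 1) (x y : 𝕜) (j : ℕ) :
    φ (A⁻¹ ^ (2 * j + 1 + 1) *ᵥ (x • (A *ᵥ v) + y • v)) = c⁻¹ ^ (j + 1) * x := by
  rw [show 2 * j + 1 + 1 = 2 * (j + 1) by ring,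
    inv_pow_two_mul_mulVec_of_mul_self_eq_smul_one hc h]
  simp only [map_smul, map_add, hφv, hφAv, smul_eq_mul, mul_zero, mul_one, add_zero]

end Matrix

/-- The pairs `(kᵢ, lᵢ)` with `kᵢ A v + lᵢ v ∈ {0, ±v, ±(k A v - v), ±k A v}`. -/
def digitPairs (k : ℤ) : Set (ℤ × ℤ) :=
  {(0, 0), (0, 1), (0, -1), (k, -1), (-k, 1), (k, 0), (-k, 0)}

theorem abs_le_of_mem_digitPairs {k : ℤ} {p : ℤ × ℤ} (hp : p ∈ digitPairs k) :
    |p.1| ≤ |k| ∧ |p.2| ≤ 1 := by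
  simp only [digitPairs, Set.mem_insert_iff, Set.mem_singleton_iff] at hp
  rcases hp with rfl | rfl | rfl | rfl | rfl | rfl | rfl <;> simp

theorem stmt5_general (A : Matrix (Fin 2) (Fin 2) ℝ)
    (h : A * A + (3 : ℝ) • (1 : Matrix (Fin 2) (Fin 2) ℝ) = 0)
    (k : ℤ) (hk : 1 < |k|)
    (v : Fin 2 → ℝ) (hv : LinearIndependent ℝ ![v, A *ᵥ v])
    (ks ls : ℕ → ℤ)
    (hd : ∀ i, (ks i, ls i) ∈
      ({(0, 0), (0, 1), (0, -1), (k, -1), (-k, 1), (k, 0), (-k, 0)} : Set (ℤ × ℤ)))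
    (L K : ℝ)
    (hsum : HasSum
      (fun i : ℕ => A⁻¹ ^ (i + 1) *ᵥ ((ks i : ℝ) • (A *ᵥ v) + (ls i : ℝ) • v))
      (L • v + K • (A *ᵥ v))) :
    |K| ≤ (1 + |(k : ℝ)|) / 2 ∧ (1 + |(k : ℝ)|) / 2 < |(k : ℝ)| := by
  have hkR : (1 : ℝ) < |(k : ℝ)| := by exact_mod_cast hk
  have hA : A * A = (-3 : ℝ) • 1 := by rw [eq_neg_of_add_eq_zero_left h, neg_smul]
  have hc : (-3 : ℝ) ≠ 0 := by norm_num
  obtain ⟨φ, hφ⟩ := hv.exists_dual_apply_eq_ite 1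
  have hφv : φ v = 0 := by simpa using hφ 0
  have hφAv : φ (A *ᵥ v) = 1 := by simpa using hφ 1
  have hK := hsum.map φ (LinearMap.continuous_of_finiteDimensional φ)
  simp only [map_add, map_smul, hφv, hφAv, smul_eq_mul, mul_zero, mul_one, zero_add] at hK
  refine ⟨?_, by linarith⟩
  have hbound := hK.norm_le_of_bounded_even_odd hasSum_inv_three_pow_succ
    (hasSum_inv_three_pow_succ.mul_right |(k : ℝ)|) (fun j => ?_) (fun j => ?_)
  · simp only [Real.norm_eq_abs] at hbound
    linarith
  · rw [Function.comp_apply, apply_inv_pow_two_mul_add_one_mulVec hc hA hφv hφAv]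
    simp only [Real.norm_eq_abs, abs_mul, abs_pow, abs_inv, abs_neg, Nat.abs_ofNat]
    exact mul_le_of_le_one_right (by positivity)
      (by exact_mod_cast (abs_le_of_mem_digitPairs (hd (2 * j))).2)
  · rw [Function.comp_apply, apply_inv_pow_two_mul_add_two_mulVec hc hA hφv hφAv]
    simp only [Real.norm_eq_abs, abs_mul, abs_pow, abs_inv, abs_neg, Nat.abs_ofNat]
    exact mul_le_mul_of_nonneg_left
      (by exact_mod_cast (abs_le_of_mem_digitPairs (hd (2 * j + 1))).1) (by positivity)

theorem stmt5 (A : Matrix (Fin 2) (Fin 2) ℝ) (hint : IsIntMat A)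
    (h : A * A + (3 : ℝ) • (1 : Matrix (Fin 2) (Fin 2) ℝ) = 0)
    (k : ℤ) (hk : 1 < |k|)
    (v : Fin 2 → ℝ) (hv : LinearIndependent ℝ ![v, A *ᵥ v])
    (ks ls : ℕ → ℤ)
    (hd : ∀ i, (ks i, ls i) ∈
      ({(0, 0), (0, 1), (0, -1), (k, -1), (-k, 1), (k, 0), (-k, 0)} : Set (ℤ × ℤ)))
    (L K : ℝ)
    (hsum : HasSum
      (fun i : ℕ => A⁻¹ ^ (i + 1) *ᵥ ((ks i : ℝ) • (A *ᵥ v) + (ls i : ℝ) • v))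
      (L • v + K • (A *ᵥ v))) :
    |K| ≤ (1 + |(k : ℝ)|) / 2 ∧ (1 + |(k : ℝ)|) / 2 < |(k : ℝ)| :=
  stmt5_general A h k hk v hv ks ls hd L K hsum
end

section
/- Let A be a 2×2 integer matrix with A² = −3I, v such that {v, Av} is linearly independent, and 𝒟 = {0, v, Av}. Then both v and Av lie in T − T, where T = T(A,𝒟) is the associated self-affine set; hence T is connected. -/
/-!
Write `φ d x = A⁻¹ (x + d)` for the digit maps, so that `T = ⋃_{d ∈ D} φ d '' T`. Since
`A² = -3`, every composite `φ d ∘ φ e` is `x ↦ -x/3 + c`, so `T` is also the attractor of these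
nine contractions. The points `v = φ (Av) 0`, `η = -(3/4) Av` and `ξ = φ 0 (φ 0 η) = Av/4` lie
in `T` (`η` is the fixed point of `φ v ∘ φ (Av) ∘ φ 0 ∘ φ 0`, the point with periodic digits
`v, Av, 0, 0, …`), whence `v = v - 0` and `Av = ξ - η` lie in `T - T`. Equivalently, `φ v '' T`
and `φ (Av) '' T` both meet `φ 0 '' T`, so the pieces of `T` form a connected graph, and Hata's
argument applies: the pieces of the two-step system form a connected graph too, and pushing
chains of pieces through the contractions joins any two points of the compact set `T` by
`ε`-chains inside `T` for every `ε > 0`, which forces `T` to be connected.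
-/

open Matrix
open scoped Pointwise

/-- The self-affine set `T(A, D) = {∑_{i≥1} A^{-i} d_i : d_i ∈ D}`. -/
noncomputable def selfAffine (A : Matrix (Fin 2) (Fin 2) ℝ) (D : Set (Fin 2 → ℝ)) :
    Set (Fin 2 → ℝ) :=
  { x | ∃ d : ℕ → (Fin 2 → ℝ), (∀ n, d n ∈ D) ∧
      HasSum (fun n => (A⁻¹ ^ (n + 1)) *ᵥ d n) x }

open Set Filter Topology Function Metric
open scoped NNReal

section Chains

variable {X : Type*} [MetricSpace X]

def Chained (S : Set X) (ε : ℝ) : X → X → Prop :=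
  Relation.ReflTransGen fun a b => b ∈ S ∧ dist a b ≤ ε

theorem Chained.mono {S : Set X} {ε ε' : ℝ} (hε : ε ≤ ε') {a b : X} (h : Chained S ε a b) :
    Chained S ε' a b :=
  Relation.ReflTransGen.mono (fun _ _ hab => ⟨hab.1, hab.2.trans hε⟩) _ _ h

theorem Chained.trans {S : Set X} {ε : ℝ} {a b c : X} (hab : Chained S ε a b)
    (hbc : Chained S ε b c) : Chained S ε a c :=
  Relation.ReflTransGen.trans hab hbc

theorem Chained.image {S : Set X} {ε : ℝ} {g : X → X} {K : ℝ≥0} (hgS : MapsTo g S S)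
    (hg : LipschitzWith K g) {a b : X} (h : Chained S ε a b) : Chained S (K * ε) (g a) (g b) :=
  Relation.ReflTransGen.lift g
    (fun _ _ hab => ⟨hgS hab.1, (hg.dist_le_mul _ _).trans (by gcongr; exact hab.2)⟩) _ _ h

theorem IsCompact.isPreconnected_of_chained {T : Set X} (hT : IsCompact T)
    (hchain : ∀ ε > 0, ∀ x ∈ T, ∀ y ∈ T, Chained T ε x y) : IsPreconnected T := by
  rintro U V hU hV hUV ⟨x, hxT, hxU⟩ ⟨y, hyT, hyV⟩
  by_contra hUV'
  have hnotV : ∀ z ∈ T, z ∈ U → z ∉ V := fun z hz hzU hzV => hUV' ⟨z, hz, hzU, hzV⟩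
  have hdisj : Disjoint (T \ V) (T \ U) :=
    disjoint_left.2 fun z ⟨hzT, hzV⟩ ⟨_, hzU⟩ => (hUV hzT).elim hzU hzV
  obtain ⟨δ, hδ, hsep⟩ := hdisj.exists_thickenings (hT.diff hV) (hT.diff hU).isClosed
  -- a chain of step `δ / 2` cannot jump from `T \ V` to `T \ U`
  have hstay : ∀ b, Chained T (δ / 2) x b → b ∈ T \ V := by
    intro b hb
    induction hb with
    | refl => exact ⟨hxT, hnotV x hxT hxU⟩
    | @tail c b _ hcb ih =>
      refine ⟨hcb.1, fun hbV => disjoint_left.1 hsep ?_ (self_subset_thickening hδ _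
        ⟨hcb.1, fun hbU => hnotV b hcb.1 hbU hbV⟩)⟩
      exact mem_thickening_iff.2 ⟨c, ih, by rw [dist_comm]; linarith [hcb.2]⟩
  exact (hstay y (hchain _ (half_pos hδ) x hxT y hyT)).2 hyV

end Chains

section IteratedFunctionSystem

variable {X ι : Type*} {T : Set X} {f : ι → X → X}

def PiecesMeet (T : Set X) (f : ι → X → X) (i j : ι) : Prop :=
  (f i '' T ∩ f j '' T).Nonempty

theorem reflTransGen_piecesMeet_comp (hcover : T ⊆ ⋃ i, f i '' T)
    (hconn : ∀ i j, Relation.ReflTransGen (PiecesMeet T f) i j) (p q : ι × ι) :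
    Relation.ReflTransGen (PiecesMeet T fun p => f p.1 ∘ f p.2) p q := by
  have hinner : ∀ i j k,
      Relation.ReflTransGen (PiecesMeet T fun p => f p.1 ∘ f p.2) (i, j) (i, k) :=
    fun i j k => Relation.ReflTransGen.lift (fun j => (i, j))
      (fun _ _ ⟨_, ⟨a, ha, hza⟩, ⟨b, hb, hzb⟩⟩ =>
        ⟨_, ⟨a, ha, congrArg (f i) hza⟩, ⟨b, hb, congrArg (f i) hzb⟩⟩) _ _ (hconn j k)
  have houter : ∀ i i', PiecesMeet T f i i' →
      ∃ j j', PiecesMeet T (fun p => f p.1 ∘ f p.2) (i, j) (i', j') := by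
    rintro i i' ⟨_, ⟨a, ha, rfl⟩, ⟨b, hb, hba⟩⟩
    obtain ⟨j, a', ha', rfl⟩ := mem_iUnion.1 (hcover ha)
    obtain ⟨j', b', hb', rfl⟩ := mem_iUnion.1 (hcover hb)
    exact ⟨j, j', _, ⟨a', ha', rfl⟩, ⟨b', hb', hba⟩⟩
  obtain ⟨i, j⟩ := p
  obtain ⟨i', j'⟩ := q
  induction hconn i i' generalizing j' with
  | refl => exact hinner i j j'
  | @tail i' i'' _ hmeet ih =>
    obtain ⟨k, k', hk⟩ := houter i' i'' hmeet
    exact ((ih k).tail hk).trans (hinner i'' k' j')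

instance : Std.Symm (PiecesMeet T f) where
  symm _ _ h := by rwa [PiecesMeet, inter_comm]

theorem reflTransGen_piecesMeet_of_star (c : ι)
    (hstar : ∀ i, Relation.ReflTransGen (PiecesMeet T f) i c) (i j : ι) :
    Relation.ReflTransGen (PiecesMeet T f) i j :=
  (hstar i).trans (Std.Symm.symm _ _ (hstar j))

theorem subset_iUnion_image_comp (hcover : T ⊆ ⋃ i, f i '' T) :
    T ⊆ ⋃ p : ι × ι, (f p.1 ∘ f p.2) '' T := by
  intro x hx
  obtain ⟨i, y, hy, rfl⟩ := mem_iUnion.1 (hcover hx)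
  obtain ⟨j, z, hz, rfl⟩ := mem_iUnion.1 (hcover hy)
  exact mem_iUnion.2 ⟨(i, j), z, hz, rfl⟩

variable [MetricSpace X]

theorem chained_of_piecesMeet {K : ℝ≥0} {R : ℝ} (hmaps : ∀ i, MapsTo (f i) T T)
    (hcover : T ⊆ ⋃ i, f i '' T) (hlip : ∀ i, LipschitzWith K (f i))
    (hconn : ∀ i j, Relation.ReflTransGen (PiecesMeet T f) i j)
    (hR : ∀ x ∈ T, ∀ y ∈ T, dist x y ≤ R) (n : ℕ) :
    ∀ x ∈ T, ∀ y ∈ T, Chained T ((K : ℝ) ^ n * R) x y := by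
  induction n with
  | zero => exact fun x hx y hy => .single ⟨hy, by simpa using hR x hx y hy⟩
  | succ n ih =>
    have hpiece : ∀ i, ∀ a ∈ T, ∀ b ∈ T, Chained T ((K : ℝ) ^ (n + 1) * R) (f i a) (f i b) :=
      fun i a ha b hb => by
        simpa [pow_succ', mul_assoc] using (ih a ha b hb).image (hmaps i) (hlip i)
    have hpieces : ∀ i j, Relation.ReflTransGen (PiecesMeet T f) i j →
        ∀ a ∈ T, ∀ b ∈ T, Chained T ((K : ℝ) ^ (n + 1) * R) (f i a) (f j b) := by
      intro i j hij
      induction hij with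
      | refl => exact hpiece i
      | tail _ hjk ih =>
        obtain ⟨_, ⟨c, hc, rfl⟩, ⟨d, hd, hdc⟩⟩ := hjk
        exact fun a ha b hb => (ih a ha c hc).trans (hdc ▸ hpiece _ d hd b hb)
    intro x hx y hy
    obtain ⟨i, a, ha, rfl⟩ := mem_iUnion.1 (hcover hx)
    obtain ⟨j, b, hb, rfl⟩ := mem_iUnion.1 (hcover hy)
    exact hpieces i j (hconn i j) a ha b hb

theorem IsCompact.isPreconnected_of_piecesMeet {K : ℝ≥0} (hT : IsCompact T) (hK : K < 1)
    (hmaps : ∀ i, MapsTo (f i) T T) (hcover : T ⊆ ⋃ i, f i '' T)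
    (hlip : ∀ i, LipschitzWith K (f i))
    (hconn : ∀ i j, Relation.ReflTransGen (PiecesMeet T f) i j) : IsPreconnected T := by
  obtain ⟨R, hR⟩ := isBounded_iff.1 hT.isBounded
  refine hT.isPreconnected_of_chained fun ε hε x hx y hy => ?_
  have hlim : Tendsto (fun n => (K : ℝ) ^ n * R) atTop (𝓝 0) := by
    simpa using (tendsto_pow_atTop_nhds_zero_of_lt_one K.2 hK).mul_const R
  obtain ⟨n, hn⟩ := (hlim.eventually_lt_const hε).exists
  exact (chained_of_piecesMeet hmaps hcover hlip hconn (fun x hx y hy => hR hx hy) n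
    x hx y hy).mono hn.le

theorem IsClosed.mem_of_isFixedPt {S : Set X} {g : X → X} {K : ℝ≥0} (hS : IsClosed S)
    (hne : S.Nonempty) (hK : K < 1) (hg : LipschitzWith K g) (hgS : MapsTo g S S) {x : X}
    (hx : IsFixedPt g x) : x ∈ S := by
  obtain ⟨s, hs⟩ := hne
  refine hS.mem_of_tendsto (f := fun n => g^[n] s) (b := atTop) ?_
    (.of_forall fun n => hgS.iterate n hs)
  rw [tendsto_iff_dist_tendsto_zero]
  refine squeeze_zero (fun _ => dist_nonneg) (fun n => ?_)
    (by simpa using (tendsto_pow_atTop_nhds_zero_of_lt_one K.2 hK).mul_const (dist s x))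
  calc dist (g^[n] s) x = dist (g^[n] s) (g^[n] x) := by rw [(hx.iterate n).eq]
    _ ≤ (K : ℝ) ^ n * dist s x := by simpa using (hg.iterate n).dist_le_mul s x

end IteratedFunctionSystem

theorem HasSum.matrix_mulVec {ι m n R : Type*} [Fintype n] [CommSemiring R] [TopologicalSpace R]
    [IsTopologicalSemiring R] (M : Matrix m n R) {f : ι → n → R} {x : n → R} (hf : HasSum f x) :
    HasSum (fun i => M *ᵥ f i) (M *ᵥ x) :=
  hf.map (mulVecLin M).toAddMonoidHom (continuous_const.matrix_mulVec continuous_id)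

noncomputable def digitMap (A : Matrix (Fin 2) (Fin 2) ℝ) (d x : Fin 2 → ℝ) : Fin 2 → ℝ :=
  A⁻¹ *ᵥ (x + d)

section SelfAffine

variable {A : Matrix (Fin 2) (Fin 2) ℝ} {D : Set (Fin 2 → ℝ)}

theorem zero_mem_selfAffine (hD : 0 ∈ D) : 0 ∈ selfAffine A D :=
  ⟨0, fun _ => hD, by simp⟩

theorem mapsTo_digitMap {d : Fin 2 → ℝ} (hd : d ∈ D) :
    MapsTo (digitMap A d) (selfAffine A D) (selfAffine A D) := by
  rintro x ⟨e, he, hsum⟩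
  refine ⟨fun n => Nat.rec d (fun k _ => e k) n, fun n => n.casesOn hd he, ?_⟩
  rw [← hasSum_nat_add_iff' 1, Finset.sum_range_one]
  simpa only [digitMap, Nat.rec_zero, Nat.rec_add_one, zero_add, pow_one, mulVec_add,
    add_sub_cancel_right, pow_succ' _ (_ + 1), ← mulVec_mulVec] using hsum.matrix_mulVec A⁻¹

theorem exists_digitMap_eq (hA : IsUnit A.det) {x : Fin 2 → ℝ} (hx : x ∈ selfAffine A D) :
    ∃ d ∈ D, ∃ y ∈ selfAffine A D, digitMap A d y = x := by
  obtain ⟨e, he, hsum⟩ := hx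
  refine ⟨e 0, he 0, A *ᵥ x - e 0, ⟨fun n => e (n + 1), fun n => he (n + 1), ?_⟩, ?_⟩
  · have hA' : A * A⁻¹ = 1 := mul_nonsing_inv A hA
    convert ((hasSum_nat_add_iff' 1).2 hsum).matrix_mulVec A using 1
    · ext1 n
      rw [mulVec_mulVec, pow_succ' _ (n + 1), ← mul_assoc, hA', one_mul]
    · rw [Finset.sum_range_one, mulVec_sub, mulVec_mulVec, pow_one, hA', one_mulVec]
  · rw [digitMap, sub_add_cancel, mulVec_mulVec, nonsing_inv_mul A hA, one_mulVec]

theorem piecesMeet_digitMap_of_sub_mem_sub {ι : Type*} {δ : ι → Fin 2 → ℝ}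
    {S : Set (Fin 2 → ℝ)} {i j : ι} (h : δ i - δ j ∈ S - S) :
    PiecesMeet S (fun i => digitMap A (δ i)) i j := by
  obtain ⟨x, hx, y, hy, hxy⟩ := h
  refine ⟨digitMap A (δ i) y, ⟨y, hy, rfl⟩, x, hx, ?_⟩
  dsimp only
  rw [digitMap, digitMap, sub_eq_sub_iff_add_eq_add.1 hxy, add_comm]

theorem isCompact_selfAffine (hD : D.Finite) {u : ℕ → ℝ} (hu : Summable u)
    (hbound : ∀ n, ∀ d ∈ D, ‖A⁻¹ ^ (n + 1) *ᵥ d‖ ≤ u n) : IsCompact (selfAffine A D) := by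
  have : Finite D := hD.to_subtype
  have hrange : selfAffine A D =
      range fun σ : ℕ → D => ∑' n, A⁻¹ ^ (n + 1) *ᵥ (σ n : Fin 2 → ℝ) := by
    ext x
    constructor
    · rintro ⟨d, hd, hsum⟩
      exact ⟨fun n => ⟨d n, hd n⟩, hsum.tsum_eq⟩
    · rintro ⟨σ, rfl⟩
      exact ⟨fun n => σ n, fun n => (σ n).2,
        (Summable.of_norm_bounded hu fun n => hbound n _ (σ n).2).hasSum⟩
  rw [hrange]
  exact isCompact_range <| continuous_tsum
    (fun n => continuous_const.matrix_mulVec (continuous_subtype_val.comp (continuous_apply n)))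
    hu fun n σ => hbound n _ (σ n).2

end SelfAffine

theorem Matrix.mul_inv_smul_self_eq_one {n K : Type*} [Fintype n] [DecidableEq n]
    [Field K] {A : Matrix n n K} {c : K} (hc : c ≠ 0) (hA : A * A = c • 1) :
    A * (c⁻¹ • A) = 1 := by
  rw [Matrix.mul_smul, hA, smul_smul, inv_mul_cancel₀ hc, one_smul]

theorem Matrix.isUnit_det_of_mul_self_eq_smul_one {n K : Type*} [Fintype n] [DecidableEq n]
    [Field K] {A : Matrix n n K} {c : K} (hc : c ≠ 0) (hA : A * A = c • 1) : IsUnit A.det :=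
  isUnit_det_of_right_inverse (mul_inv_smul_self_eq_one hc hA)

theorem Matrix.inv_eq_smul_of_mul_self_eq_smul_one {n K : Type*} [Fintype n] [DecidableEq n]
    [Field K] {A : Matrix n n K} {c : K} (hc : c ≠ 0) (hA : A * A = c • 1) : A⁻¹ = c⁻¹ • A :=
  inv_eq_right_inv (mul_inv_smul_self_eq_one hc hA)

theorem Matrix.inv_mul_inv_of_mul_self_eq_smul_one_s7 {n K : Type*} [Fintype n] [DecidableEq n]
    [Field K] {A : Matrix n n K} {c : K} (hc : c ≠ 0) (hA : A * A = c • 1) :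
    A⁻¹ * A⁻¹ = c⁻¹ • 1 := by
  rw [inv_eq_smul_of_mul_self_eq_smul_one hc hA, Matrix.smul_mul, Matrix.mul_smul, hA,
    smul_smul, smul_smul, inv_mul_cancel_right₀ hc]

section SquareNegThree

variable {A : Matrix (Fin 2) (Fin 2) ℝ}

theorem norm_inv_pow_succ_mulVec_le (hA : A * A = (-3 : ℝ) • 1) (n : ℕ) (x : Fin 2 → ℝ) :
    ‖A⁻¹ ^ (n + 1) *ᵥ x‖ ≤ 3⁻¹ ^ (n / 2) * (‖x‖ + ‖A⁻¹ *ᵥ x‖) := by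
  have hsq := inv_mul_inv_of_mul_self_eq_smul_one_s7 (by norm_num) hA
  have hpow : ∀ k, A⁻¹ ^ (2 * k) = (-3 : ℝ)⁻¹ ^ k • 1 := fun k => by
    rw [pow_mul, sq, hsq, smul_pow, one_pow]
  have hnorm : ∀ k (y : Fin 2 → ℝ), ‖(-3 : ℝ)⁻¹ ^ k • y‖ = 3⁻¹ ^ k * ‖y‖ := fun k y => by
    rw [norm_smul]; norm_num
  obtain ⟨k, rfl | rfl⟩ := Nat.even_or_odd' n
  · rw [pow_succ, hpow, Matrix.smul_mul, one_mul, smul_mulVec, hnorm,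
      Nat.mul_div_cancel_left _ two_pos]
    gcongr
    exact le_add_of_nonneg_left (norm_nonneg x)
  · rw [show 2 * k + 1 + 1 = 2 * (k + 1) by ring, hpow, smul_mulVec, one_mulVec, hnorm,
      show (2 * k + 1) / 2 = k by omega]
    calc 3⁻¹ ^ (k + 1) * ‖x‖ ≤ 3⁻¹ ^ k * ‖x‖ :=
          mul_le_mul_of_nonneg_right (pow_le_pow_of_le_one (by norm_num) (by norm_num) k.le_succ)
            (norm_nonneg x)
      _ ≤ 3⁻¹ ^ k * (‖x‖ + ‖A⁻¹ *ᵥ x‖) := by gcongr; exact le_add_of_nonneg_right (norm_nonneg _)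

theorem summable_inv_three_pow_half : Summable fun n : ℕ => (3⁻¹ : ℝ) ^ (n / 2) := by
  have hg : Summable fun k : ℕ => (3⁻¹ : ℝ) ^ k :=
    summable_geometric_of_lt_one (by norm_num) (by norm_num)
  refine Summable.even_add_odd ?_ ?_
  · simpa [Nat.mul_div_cancel_left] using hg
  · simpa [show ∀ k, (2 * k + 1) / 2 = k by omega] using hg

theorem isCompact_selfAffine_of_mul_self_eq (hA : A * A = (-3 : ℝ) • 1) {D : Set (Fin 2 → ℝ)}
    (hD : D.Finite) : IsCompact (selfAffine A D) := by
  obtain ⟨C, hC⟩ := (hD.image fun d => ‖d‖ + ‖A⁻¹ *ᵥ d‖).bddAbove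
  refine isCompact_selfAffine hD (summable_inv_three_pow_half.mul_right C) fun n d hd => ?_
  refine (norm_inv_pow_succ_mulVec_le hA n d).trans ?_
  gcongr
  exact hC (mem_image_of_mem _ hd)

theorem digitMap_comp_digitMap_apply (hA : A * A = (-3 : ℝ) • 1) (d e x : Fin 2 → ℝ) :
    (digitMap A d ∘ digitMap A e) x = (-3 : ℝ)⁻¹ • (x + e) + A⁻¹ *ᵥ d := by
  simp only [Function.comp, digitMap, mulVec_add, mulVec_mulVec,
    inv_mul_inv_of_mul_self_eq_smul_one_s7 (by norm_num) hA, smul_mulVec, one_mulVec, smul_add]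

theorem lipschitzWith_digitMap_comp (hA : A * A = (-3 : ℝ) • 1) (d e : Fin 2 → ℝ) :
    LipschitzWith 3⁻¹ (digitMap A d ∘ digitMap A e) := by
  refine LipschitzWith.of_dist_le_mul fun x y => le_of_eq ?_
  rw [dist_eq_norm, dist_eq_norm, digitMap_comp_digitMap_apply hA,
    digitMap_comp_digitMap_apply hA, add_sub_add_right_eq_sub, ← smul_sub,
    add_sub_add_right_eq_sub, norm_smul]
  norm_num

theorem isPreconnected_selfAffine (hA : A * A = (-3 : ℝ) • 1) {ι : Type*} [Finite ι]
    {δ : ι → Fin 2 → ℝ}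
    (hconn : ∀ i j, Relation.ReflTransGen
      (PiecesMeet (selfAffine A (range δ)) fun i => digitMap A (δ i)) i j) :
    IsPreconnected (selfAffine A (range δ)) := by
  have hcover : selfAffine A (range δ) ⊆ ⋃ i, digitMap A (δ i) '' selfAffine A (range δ) := by
    intro x hx
    obtain ⟨_, ⟨i, rfl⟩, y, hy, rfl⟩ :=
      exists_digitMap_eq (isUnit_det_of_mul_self_eq_smul_one (by norm_num) hA) hx
    exact mem_iUnion.2 ⟨i, y, hy, rfl⟩
  -- the digit maps need not contract in the sup norm, but their two-fold composites do
  exact (isCompact_selfAffine_of_mul_self_eq hA (finite_range δ)).isPreconnected_of_piecesMeet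
    (f := fun p : ι × ι => digitMap A (δ p.1) ∘ digitMap A (δ p.2)) (K := 3⁻¹) (by norm_num)
    (fun p => (mapsTo_digitMap (mem_range_self p.1)).comp (mapsTo_digitMap (mem_range_self p.2)))
    (subset_iUnion_image_comp hcover) (fun p => lipschitzWith_digitMap_comp hA _ _)
    (reflTransGen_piecesMeet_comp hcover hconn)

section Triple

variable {v : Fin 2 → ℝ}

theorem self_mem_selfAffine (hA : A * A = (-3 : ℝ) • 1) :
    v ∈ selfAffine A {0, v, A *ᵥ v} := by
  have hv : digitMap A (A *ᵥ v) 0 = v := by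
    rw [digitMap, zero_add, mulVec_mulVec,
      nonsing_inv_mul A (isUnit_det_of_mul_self_eq_smul_one (by norm_num) hA), one_mulVec]
  have hmem : digitMap A (A *ᵥ v) 0 ∈ selfAffine A {0, v, A *ᵥ v} :=
    mapsTo_digitMap (by simp only [mem_insert_iff, mem_singleton_iff, or_true])
      (zero_mem_selfAffine (mem_insert 0 _))
  rwa [hv] at hmem

theorem neg_three_quarters_smul_mem_selfAffine (hA : A * A = (-3 : ℝ) • 1) :
    (-(3 / 4) : ℝ) • (A *ᵥ v) ∈ selfAffine A {0, v, A *ᵥ v} := by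
  have hinv := inv_eq_smul_of_mul_self_eq_smul_one (by norm_num) hA
  have hfix : IsFixedPt ((digitMap A v ∘ digitMap A (A *ᵥ v)) ∘ (digitMap A 0 ∘ digitMap A 0))
      ((-(3 / 4) : ℝ) • (A *ᵥ v)) := by
    rw [IsFixedPt, Function.comp_apply, digitMap_comp_digitMap_apply hA,
      digitMap_comp_digitMap_apply hA, mulVec_zero, hinv, smul_mulVec]
    module
  have h0 : (0 : Fin 2 → ℝ) ∈ ({0, v, A *ᵥ v} : Set (Fin 2 → ℝ)) := mem_insert 0 _
  have hv : v ∈ ({0, v, A *ᵥ v} : Set (Fin 2 → ℝ)) := mem_insert_of_mem 0 (mem_insert v _)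
  have hAv : A *ᵥ v ∈ ({0, v, A *ᵥ v} : Set (Fin 2 → ℝ)) :=
    mem_insert_of_mem 0 (mem_insert_of_mem v rfl)
  exact (isCompact_selfAffine_of_mul_self_eq hA (toFinite _)).isClosed.mem_of_isFixedPt
    ⟨0, zero_mem_selfAffine h0⟩ (K := 3⁻¹ * 3⁻¹) (by norm_num)
    ((lipschitzWith_digitMap_comp hA _ _).comp (lipschitzWith_digitMap_comp hA _ _))
    (((mapsTo_digitMap hv).comp (mapsTo_digitMap hAv)).comp
      ((mapsTo_digitMap h0).comp (mapsTo_digitMap h0))) hfix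

theorem inv_four_smul_mem_selfAffine (hA : A * A = (-3 : ℝ) • 1) :
    (4⁻¹ : ℝ) • (A *ᵥ v) ∈ selfAffine A {0, v, A *ᵥ v} := by
  have h0 : (0 : Fin 2 → ℝ) ∈ ({0, v, A *ᵥ v} : Set (Fin 2 → ℝ)) := mem_insert 0 _
  have hmem := (mapsTo_digitMap h0).comp (mapsTo_digitMap h0)
    (neg_three_quarters_smul_mem_selfAffine hA)
  rw [digitMap_comp_digitMap_apply hA, mulVec_zero, add_zero, add_zero, smul_smul] at hmem
  convert hmem using 2
  norm_num

end Triple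

end SquareNegThree

theorem stmt7_general (A : Matrix (Fin 2) (Fin 2) ℝ)
    (h : A * A + (3 : ℝ) • (1 : Matrix (Fin 2) (Fin 2) ℝ) = 0)
    (v : Fin 2 → ℝ)
    (D : Set (Fin 2 → ℝ)) (hD : D = {0, v, A *ᵥ v})
    (T : Set (Fin 2 → ℝ)) (hT : T = selfAffine A D) :
    v ∈ T - T ∧ (A *ᵥ v) ∈ T - T ∧ IsConnected T := by
  subst hT hD
  have hA : A * A = (-3 : ℝ) • 1 := by rw [neg_smul]; exact eq_neg_of_add_eq_zero_left h
  have h0 : (0 : Fin 2 → ℝ) ∈ selfAffine A {0, v, A *ᵥ v} := zero_mem_selfAffine (mem_insert 0 _)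
  have hv : v ∈ selfAffine A {0, v, A *ᵥ v} - selfAffine A {0, v, A *ᵥ v} :=
    ⟨v, self_mem_selfAffine hA, 0, h0, sub_zero v⟩
  have hAv : A *ᵥ v ∈ selfAffine A {0, v, A *ᵥ v} - selfAffine A {0, v, A *ᵥ v} :=
    ⟨_, inv_four_smul_mem_selfAffine hA, _, neg_three_quarters_smul_mem_selfAffine hA, by module⟩
  refine ⟨hv, hAv, ⟨0, h0⟩, ?_⟩
  have hrange : ({0, v, A *ᵥ v} : Set (Fin 2 → ℝ)) = range ![0, v, A *ᵥ v] := by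
    simp only [range_cons, range_empty, union_empty, singleton_union]
  rw [hrange] at hv hAv ⊢
  refine isPreconnected_selfAffine hA (reflTransGen_piecesMeet_of_star 0 fun i => ?_)
  fin_cases i
  · exact .refl
  · exact .single (piecesMeet_digitMap_of_sub_mem_sub (by simpa using hv))
  · exact .single (piecesMeet_digitMap_of_sub_mem_sub (by simpa using hAv))

theorem stmt7 (A : Matrix (Fin 2) (Fin 2) ℝ) (hint : IsIntMat A)
    (h : A * A + (3 : ℝ) • (1 : Matrix (Fin 2) (Fin 2) ℝ) = 0)
    (v : Fin 2 → ℝ) (hv : LinearIndependent ℝ ![v, A *ᵥ v])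
    (D : Set (Fin 2 → ℝ)) (hD : D = {0, v, A *ᵥ v})
    (T : Set (Fin 2 → ℝ)) (hT : T = selfAffine A D) :
    v ∈ T - T ∧ (A *ᵥ v) ∈ T - T ∧ IsConnected T :=
  stmt7_general A h v D hD T hT
end

section
/- Let A be an expanding 2×2 matrix with characteristic polynomial x² + x + 3, v with {v, Av} linearly independent, and define β_i by A^{−i}v = α_i v + β_i Av. Then ∑_{i=1}^{∞} |β_i| < 0.63. -/
open Matrix Polynomial

set_option maxHeartbeats 1000000 in
lemma beta_aux (β : ℕ → ℝ) (h1 : β 1 = -(1/3)) (h2 : β 2 = 1/9)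
    (hrec : ∀ i, 1 ≤ i → β (i+2) = -(β (i+1) + β i)/3) :
    Summable (fun i : ℕ => |β (i + 1)|) ∧ ∑' i : ℕ, |β (i + 1)| < 0.63 := by
  -- explicit values
  have h3 : β 3 = 2/27 := by have h := hrec 1 le_rfl; norm_num [h1, h2] at h; linarith
  have h4 : β 4 = -(5/81) := by have h := hrec 2 (by norm_num); norm_num [h2, h3] at h; linarith
  have h5 : β 5 = -(1/243) := by have h := hrec 3 (by norm_num); norm_num [h3, h4] at h; linarith
  have h6 : β 6 = 16/729 := by have h := hrec 4 (by norm_num); norm_num [h4, h5] at h; linarith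
  have h7 : β 7 = -(13/2187) := by have h := hrec 5 (by norm_num); norm_num [h5, h6] at h; linarith
  have h8 : β 8 = -(35/6561) := by have h := hrec 6 (by norm_num); norm_num [h6, h7] at h; linarith
  have h9 : β 9 = 74/19683 := by have h := hrec 7 (by norm_num); norm_num [h7, h8] at h; linarith
  have h10 : β 10 = 31/59049 := by have h := hrec 8 (by norm_num); norm_num [h8, h9] at h; linarith
  have h11 : β 11 = -(253/177147) := by
    have h := hrec 9 (by norm_num); norm_num [h9, h10] at h; linarith
  have h12 : β 12 = 160/531441 := by
    have h := hrec 10 (by norm_num); norm_num [h10, h11] at h; linarith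
  -- geometric bound
  have hbd : ∀ i : ℕ, |β (i+1)| ≤ (2/5) * (4/5)^i := by
    have H : ∀ i : ℕ, |β (i+1)| ≤ (2/5)*(4/5)^i ∧ |β (i+2)| ≤ (2/5)*(4/5)^(i+1) := by
      intro i
      induction i with
      | zero =>
        constructor
        · rw [h1]; rw [abs_le]; norm_num
        · rw [h2]; rw [abs_le]; norm_num
      | succ n ih =>
        refine ⟨by simpa [show n+1+1 = n+2 from rfl] using ih.2, ?_⟩
        have hr := hrec (n+1) (by omega)
        rw [show n+1+2 = n+3 from rfl] at hr ⊢
        rw [show n+1+1 = n+2 from rfl] at hr ⊢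
        rw [hr]
        have t1 := ih.1
        have t2 := ih.2
        have habs : |(-(β (n+2) + β (n+1)))/3| ≤ (|β (n+2)| + |β (n+1)|)/3 := by
          rw [abs_div, abs_neg, show |(3:ℝ)| = 3 by norm_num]
          exact div_le_div_of_nonneg_right (abs_add_le _ _) (by norm_num) |>.trans_eq rfl
        have hp : (0:ℝ) ≤ (4/5:ℝ)^n := by positivity
        calc |(-(β (n+2) + β (n+1)))/3| ≤ (|β (n+2)| + |β (n+1)|)/3 := habs
          _ ≤ ((2/5)*(4/5)^(n+1) + (2/5)*(4/5)^n)/3 := by linarith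
          _ ≤ (2/5)*(4/5)^(n+2) := by simp only [pow_succ]; nlinarith
    exact fun i => (H i).1
  have hs : Summable (fun i : ℕ => |β (i+1)|) :=
    Summable.of_nonneg_of_le (fun i => abs_nonneg _) hbd
      (((summable_geometric_of_lt_one (by norm_num) (by norm_num))).mul_left _)
  refine ⟨hs, ?_⟩
  -- tail sums
  set T : ℕ → ℝ := fun n => ∑' i : ℕ, |β (i + n + 1)| with hT
  have hsn : ∀ n : ℕ, Summable (fun i : ℕ => |β (i + n + 1)|) := fun n =>
    (summable_nat_add_iff n).mpr hs
  have hsplit : ∀ n, T n = |β (n+1)| + T (n+1) := by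
    intro n
    have := Summable.tsum_eq_zero_add (hsn n)
    simp only [hT]
    rw [this, zero_add]
    congr 1
    exact tsum_congr fun b => by congr 2; omega
  have hT3 : ∀ n, T (n+2) ≤ (T (n+1) + T n)/3 := by
    intro n
    have hpt : ∀ i : ℕ, |β (i + (n+2) + 1)| ≤ (|β (i + (n+1) + 1)| + |β (i + n + 1)|)/3 := by
      intro i
      have hr := hrec (i+n+1) (by omega)
      have e1 : i + (n+2) + 1 = (i+n+1) + 2 := by omega
      have e2 : i + (n+1) + 1 = (i+n+1) + 1 := by omega
      rw [e1, e2, hr]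
      rw [abs_div, show |(3:ℝ)| = 3 by norm_num, abs_neg]
      exact div_le_div_of_nonneg_right (abs_add_le _ _) (by norm_num)
    have hsum2 : Summable (fun i : ℕ => (|β (i + (n+1) + 1)| + |β (i + n + 1)|)/3) :=
      ((hsn (n+1)).add (hsn n)).div_const 3
    calc T (n+2) ≤ ∑' i : ℕ, (|β (i + (n+1) + 1)| + |β (i + n + 1)|)/3 :=
          Summable.tsum_le_tsum hpt (hsn (n+2)) hsum2
      _ = (T (n+1) + T n)/3 := by
          simp only [hT]
          rw [tsum_div_const, Summable.tsum_add (hsn (n+1)) (hsn n)]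
  have hmono : ∀ n, T (n+1) ≤ T n := fun n => by
    have := hsplit n; have := abs_nonneg (β (n+1)); linarith
  have hTbound : ∀ n, T n ≤ 3*(|β (n+1)| + |β (n+1+1)|) := by
    intro n
    have e1 := hsplit n
    have e2 := hsplit (n+1)
    have e3 := hT3 n
    have e4 := hmono n
    linarith
  have h10T : T 10 ≤ 3*(|β 11| + |β 12|) := hTbound 10
  have hb11 : |β 11| = 253/177147 := by rw [h11]; rw [abs_of_nonpos (by norm_num)]; norm_num
  have hb12 : |β 12| = 160/531441 := by rw [h12]; rw [abs_of_nonneg (by norm_num)]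
  have a1 : |β 1| = 1/3 := by rw [h1, abs_of_nonpos (by norm_num)]; norm_num
  have a2 : |β 2| = 1/9 := by rw [h2, abs_of_nonneg (by norm_num)]
  have a3 : |β 3| = 2/27 := by rw [h3, abs_of_nonneg (by norm_num)]
  have a4 : |β 4| = 5/81 := by rw [h4, abs_of_nonpos (by norm_num)]; norm_num
  have a5 : |β 5| = 1/243 := by rw [h5, abs_of_nonpos (by norm_num)]; norm_num
  have a6 : |β 6| = 16/729 := by rw [h6, abs_of_nonneg (by norm_num)]
  have a7 : |β 7| = 13/2187 := by rw [h7, abs_of_nonpos (by norm_num)]; norm_num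
  have a8 : |β 8| = 35/6561 := by rw [h8, abs_of_nonpos (by norm_num)]; norm_num
  have a9 : |β 9| = 74/19683 := by rw [h9, abs_of_nonneg (by norm_num)]
  have a10 : |β 10| = 31/59049 := by rw [h10, abs_of_nonneg (by norm_num)]
  have hfront : ∑ i ∈ Finset.range 10, |β (i+1)| = 36721/59049 := by
    rw [Finset.sum_range_succ, Finset.sum_range_succ, Finset.sum_range_succ,
      Finset.sum_range_succ, Finset.sum_range_succ, Finset.sum_range_succ,
      Finset.sum_range_succ, Finset.sum_range_succ, Finset.sum_range_succ,
      Finset.sum_range_one]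
    norm_num [a1, a2, a3, a4, a5, a6, a7, a8, a9, a10]
  have hsplit10 := Summable.sum_add_tsum_nat_add 10 hs
  have hfin : ∑' i : ℕ, |β (i + 1)| = 36721/59049 + T 10 := by
    rw [← hsplit10, hfront]
  rw [hfin]
  have : (3:ℝ)*(|β 11| + |β 12|) = 919/177147 := by rw [hb11, hb12]; norm_num
  rw [this] at h10T
  norm_num
  linarith

set_option maxHeartbeats 1000000 in
theorem stmt10 (A : Matrix (Fin 2) (Fin 2) ℝ) (hexp : IsExpandingMat A)
    (hchar : A.charpoly = X ^ 2 + C (1 : ℝ) * X + C 3)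
    (v : Fin 2 → ℝ) (hv : LinearIndependent ℝ ![v, A *ᵥ v])
    (α β : ℕ → ℝ)
    (hαβ : ∀ i, 1 ≤ i → A⁻¹ ^ i *ᵥ v = α i • v + β i • (A *ᵥ v)) :
    Summable (fun i : ℕ => |β (i + 1)|) ∧ ∑' i : ℕ, |β (i + 1)| < 0.63 := by
  have hCH := Matrix.aeval_self_charpoly A
  rw [hchar] at hCH
  have hA : A * A + A + (3:ℝ) • (1 : Matrix (Fin 2) (Fin 2) ℝ) = 0 := by
    simpa [sq, Algebra.algebraMap_eq_smul_one, map_add, aeval_X, aeval_C] using hCH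
  have hright : A * ((-(1/3) : ℝ) • (A + 1)) = 1 := by
    rw [Matrix.mul_smul, mul_add, mul_one]
    have h2 : A * A + A = -((3:ℝ) • (1 : Matrix (Fin 2) (Fin 2) ℝ)) := by
      linear_combination (norm := abel) hA
    rw [h2, smul_neg, smul_smul]
    norm_num
  have hinv : A⁻¹ = (-(1/3) : ℝ) • (A + 1) := Matrix.inv_eq_right_inv hright
  have hleft : A⁻¹ * A = 1 := by rw [hinv]; exact mul_eq_one_comm.mp hright
  have key1 : A⁻¹ *ᵥ v = (-(1/3):ℝ) • v + (-(1/3):ℝ) • (A *ᵥ v) := by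
    rw [hinv, Matrix.smul_mulVec, Matrix.add_mulVec, Matrix.one_mulVec, smul_add,
      add_comm]
  have key2 : A⁻¹ *ᵥ (A *ᵥ v) = v := by
    rw [Matrix.mulVec_mulVec, hleft, Matrix.one_mulVec]
  have hpair : ∀ a b c d : ℝ, a • v + b • (A *ᵥ v) = c • v + d • (A *ᵥ v) → a = c ∧ b = d := by
    intro a b c d h
    have h0 : (a - c) • v + (b - d) • (A *ᵥ v) = 0 := by
      rw [sub_smul, sub_smul]; rw [← sub_eq_zero] at h; linear_combination (norm := abel) h
    obtain ⟨h1, h2⟩ := LinearIndependent.pair_iff.mp hv _ _ h0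
    constructor <;> linarith [sub_eq_zero.mp h1, sub_eq_zero.mp h2]
  have h1 := hαβ 1 le_rfl
  rw [pow_one, key1] at h1
  obtain ⟨hα1, hβ1⟩ := hpair _ _ _ _ h1.symm
  have hrec : ∀ i, 1 ≤ i → α (i+1) = -(1/3) * α i + β i ∧ β (i+1) = -(1/3) * α i := by
    intro i hi
    have h2 := hαβ (i+1) (by omega)
    have h3 : A⁻¹ ^ (i+1) *ᵥ v = A⁻¹ *ᵥ (A⁻¹ ^ i *ᵥ v) := by
      rw [Matrix.mulVec_mulVec, ← pow_succ']
    rw [h3, hαβ i hi, Matrix.mulVec_add, Matrix.mulVec_smul, Matrix.mulVec_smul,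
      key1, key2] at h2
    have h4 : (-(1/3) * α i + β i) • v + (-(1/3) * α i) • (A *ᵥ v)
        = α (i+1) • v + β (i+1) • (A *ᵥ v) := by
      rw [← h2]; module
    exact ⟨(hpair _ _ _ _ h4).1.symm, (hpair _ _ _ _ h4).2.symm⟩
  have hβ2 : β 2 = 1/9 := by
    have := (hrec 1 le_rfl).2
    rw [show (2:ℕ)=1+1 from rfl, this, hα1]; norm_num
  have hβrec : ∀ i, 1 ≤ i → β (i+2) = -(β (i+1) + β i)/3 := by
    intro i hi
    have ha := (hrec i hi).1
    have hb := (hrec i hi).2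
    have hc := (hrec (i+1) (by omega)).2
    rw [show i+2 = i+1+1 from rfl, hc, ha, hb]; ring
  exact beta_aux β (hα1 ▸ hβ1) hβ2 hβrec
end

section
/- Let A be an expanding 2×2 matrix with characteristic polynomial x² + x − 3, v with {v, Av} linearly independent, and define α_i, β_i by A^{−i}v = α_i v + β_i Av. Then ∑_{i=1}^{∞} |α_i| = 2 and ∑_{i=1}^{∞} |β_i| = 1. -/
/-!
By Cayley–Hamilton `A² + A = 3`, so `A⁻¹ = (A + 1) / 3` maps the coordinates `(α, β)` of a vector
in the basis `(v, Av)` to `(α / 3 + β, α / 3)`. Starting from `(1/3, 1/3)` the coordinates stay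
nonnegative, so the absolute values can be dropped; the partial sums obey the same affine
recurrence and therefore stay below its fixed point `(2, 1)`. The series thus converge, and
their sums `(S, T)` satisfy `S = 1/3 + S/3 + T`, `T = 1/3 + S/3`, i.e. `S = 2`, `T = 1`.
-/

open Matrix Polynomial

namespace Matrix

variable {n K : Type*} [Fintype n] [DecidableEq n]

theorem sq_add_self_eq_three_of_charpoly [CommRing K] {A : Matrix n n K}
    (hchar : A.charpoly = X ^ 2 + C (1 : K) * X - C 3) : A ^ 2 + A = (3 : K) • 1 := by
  have h := A.aeval_self_charpoly
  rw [hchar] at h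
  simpa [sub_eq_zero, Algebra.algebraMap_eq_smul_one] using h

variable [Field K] [CharZero K] {A : Matrix n n K}

theorem inv_eq_of_sq_add_self_eq_three (hA : A ^ 2 + A = (3 : K) • 1) :
    A⁻¹ = (3 : K)⁻¹ • (A + 1) := by
  refine inv_eq_right_inv ?_
  rw [Matrix.mul_smul, Matrix.mul_add, Matrix.mul_one, ← sq, hA, smul_smul,
    inv_mul_cancel₀ three_ne_zero, one_smul]

theorem inv_mulVec_of_sq_add_self_eq_three (hA : A ^ 2 + A = (3 : K) • 1) (v : n → K)
    (a b : K) :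
    A⁻¹ *ᵥ (a • v + b • (A *ᵥ v)) = (a / 3 + b) • v + (a / 3) • (A *ᵥ v) := by
  have hinv := inv_eq_of_sq_add_self_eq_three hA
  have hcancel : A⁻¹ * A = 1 := by
    rw [hinv, Matrix.smul_mul, Matrix.add_mul, ← sq, Matrix.one_mul, hA, smul_smul,
      inv_mul_cancel₀ three_ne_zero, one_smul]
  rw [mulVec_add, mulVec_smul, mulVec_smul, mulVec_mulVec, hcancel, one_mulVec, hinv,
    smul_mulVec, add_mulVec, one_mulVec]
  module

end Matrix

section Recurrence

variable {a b : ℕ → ℝ}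

theorem nonneg_of_recurrence (ha0 : 0 ≤ a 0) (hb0 : 0 ≤ b 0)
    (ha : ∀ n, a (n + 1) = a n / 3 + b n) (hb : ∀ n, b (n + 1) = a n / 3) (n : ℕ) :
    0 ≤ a n ∧ 0 ≤ b n := by
  induction n with
  | zero => exact ⟨ha0, hb0⟩
  | succ n ih => rw [ha, hb]; constructor <;> linarith [ih.1, ih.2]

theorem sum_range_le_of_recurrence (ha0 : 0 ≤ a 0) (hb0 : 0 ≤ b 0)
    (ha : ∀ n, a (n + 1) = a n / 3 + b n) (hb : ∀ n, b (n + 1) = a n / 3) (n : ℕ) :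
    ∑ i ∈ Finset.range n, a i ≤ 3 * (a 0 + b 0) ∧
      ∑ i ∈ Finset.range n, b i ≤ a 0 + 2 * b 0 := by
  induction n with
  | zero => simp only [Finset.sum_range_zero]; constructor <;> linarith
  | succ n ih =>
    rw [Finset.sum_range_succ', Finset.sum_range_succ']
    simp only [ha, hb, Finset.sum_add_distrib, ← Finset.sum_div]
    constructor <;> linarith [ih.1, ih.2]

theorem hasSum_of_recurrence (ha0 : 0 ≤ a 0) (hb0 : 0 ≤ b 0)
    (ha : ∀ n, a (n + 1) = a n / 3 + b n) (hb : ∀ n, b (n + 1) = a n / 3) :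
    HasSum a (3 * (a 0 + b 0)) ∧ HasSum b (a 0 + 2 * b 0) := by
  have hnonneg := nonneg_of_recurrence ha0 hb0 ha hb
  have hbound := sum_range_le_of_recurrence ha0 hb0 ha hb
  have hsa : Summable a :=
    summable_of_sum_range_le (fun n ↦ (hnonneg n).1) (fun n ↦ (hbound n).1)
  have hsb : Summable b :=
    summable_of_sum_range_le (fun n ↦ (hnonneg n).2) (fun n ↦ (hbound n).2)
  have hta : ∑' n, a n = a 0 + ∑' n, (a n / 3 + b n) := by
    rw [hsa.tsum_eq_zero_add, funext ha]
  rw [(hsa.div_const 3).tsum_add hsb, tsum_div_const] at hta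
  have htb : ∑' n, b n = b 0 + (∑' n, a n) / 3 := by
    rw [hsb.tsum_eq_zero_add, funext hb, tsum_div_const]
  refine ⟨?_, ?_⟩
  · convert hsa.hasSum using 1; linarith
  · convert hsb.hasSum using 1; linarith

end Recurrence

theorem stmt11_general (A : Matrix (Fin 2) (Fin 2) ℝ)
    (hchar : A.charpoly = X ^ 2 + C (1 : ℝ) * X - C 3)
    (v : Fin 2 → ℝ) (hv : LinearIndependent ℝ ![v, A *ᵥ v])
    (α β : ℕ → ℝ)
    (hαβ : ∀ i, 1 ≤ i → A⁻¹ ^ i *ᵥ v = α i • v + β i • (A *ᵥ v)) :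
    HasSum (fun i : ℕ => |α (i + 1)|) 2 ∧ HasSum (fun i : ℕ => |β (i + 1)|) 1 := by
  have hA := sq_add_self_eq_three_of_charpoly hchar
  have hstep (i : ℕ) (hi : 1 ≤ i) : α (i + 1) = α i / 3 + β i ∧ β (i + 1) = α i / 3 := by
    refine hv.eq_of_pair ?_
    rw [← hαβ (i + 1) (by omega), pow_succ', ← mulVec_mulVec, hαβ i hi,
      inv_mulVec_of_sq_add_self_eq_three hA]
  obtain ⟨hα1, hβ1⟩ : α 1 = 1 / 3 ∧ β 1 = 1 / 3 := by
    refine hv.eq_of_pair ?_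
    rw [← hαβ 1 le_rfl, pow_one]
    simpa using inv_mulVec_of_sq_add_self_eq_three hA v 1 0
  have ha0 : 0 ≤ α (0 + 1) := by norm_num [hα1]
  have hb0 : 0 ≤ β (0 + 1) := by norm_num [hβ1]
  have ha (n : ℕ) := (hstep (n + 1) (by omega)).1
  have hb (n : ℕ) := (hstep (n + 1) (by omega)).2
  obtain ⟨hsumα, hsumβ⟩ := hasSum_of_recurrence (a := fun i ↦ α (i + 1)) ha0 hb0 ha hb
  have hnonneg := nonneg_of_recurrence (a := fun i ↦ α (i + 1)) ha0 hb0 ha hb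
  simp only [abs_of_nonneg (hnonneg _).1, abs_of_nonneg (hnonneg _).2]
  norm_num [hα1, hβ1] at hsumα hsumβ
  exact ⟨hsumα, hsumβ⟩

theorem stmt11 (A : Matrix (Fin 2) (Fin 2) ℝ) (hexp : IsExpandingMat A)
    (hchar : A.charpoly = X ^ 2 + C (1 : ℝ) * X - C 3)
    (v : Fin 2 → ℝ) (hv : LinearIndependent ℝ ![v, A *ᵥ v])
    (α β : ℕ → ℝ)
    (hαβ : ∀ i, 1 ≤ i → A⁻¹ ^ i *ᵥ v = α i • v + β i • (A *ᵥ v)) :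
    HasSum (fun i : ℕ => |α (i + 1)|) 2 ∧ HasSum (fun i : ℕ => |β (i + 1)|) 1 :=
  stmt11_general A hchar v hv α β hαβ
end

section
/- Let A be an expanding 2×2 integer matrix with characteristic polynomial x² + px + q (q ≠ 0), v with {v, Av} linearly independent, k a nonzero integer, and 𝒟 = {0, v, kAv}. Define β_i by A^{−i}v = α_i v + β_i Av and set β̃ = ∑_{i≥1}|β_i|. If any point of T − T is written as ∑_{i=1}^{∞} A^{−i}(k_i Av + l_i v) = L v + K Av with k_i Av + l_i v ∈ 𝒟 − 𝒟, then K = ∑_{i=1}^{∞} (k_{i+1} + l_i) β_i and L = k_1 + ∑_{i=1}^{∞} (k_{i+1} + l_i) α_i; in particular |K| ≤ (1 + |k|)·β̃. -/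
open Matrix Polynomial

/-!
Since `A⁻¹ ^ (i + 1) (kᵢ • A v + lᵢ • v) = kᵢ • A⁻¹ ^ i v + lᵢ • A⁻¹ ^ (i + 1) v`, the series
regroups by powers of `A⁻¹` into `k₀ • v + ∑ (kᵢ₊₁ + lᵢ) • A⁻¹ ^ (i + 1) v`, and reading off
coordinates in the basis `(v, A v)` gives both formulas; the bound on `K` is then termwise.
The regrouping is legitimate because the digits are bounded and `∑ ‖A⁻¹ ^ (i + 1) v‖ < ∞`:
applying `A² = -p A - q` to `A (A⁻¹ ^ (i + 2) v) = A⁻¹ ^ (i + 1) v` gives `αᵢ₊₁ = -q βᵢ₊₂`,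
so the `α`-coefficients are summable along with the `β`-coefficients.
-/

theorem HasSum.succ_add_of_summable {G : Type*} [AddCommGroup G] [TopologicalSpace G]
    [IsTopologicalAddGroup G] {f g : ℕ → G} {s : G} (hg : Summable g)
    (h : HasSum (fun i => f i + g i) s) : HasSum (fun i => f (i + 1) + g i) (s - f 0) := by
  have hf : HasSum f (s - ∑' i, g i) := by simpa using h.sub hg.hasSum
  have hf' := (hasSum_nat_add_iff' 1).mpr hf
  convert hf'.add hg.hasSum using 1
  simp only [Finset.range_one, Finset.sum_singleton]
  abel

theorem HasSum.coeffs_of_linearIndependent_pair {E ι : Type*} [NormedAddCommGroup E]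
    [NormedSpace ℝ E] (hE : Module.finrank ℝ E = 2) {u w : E}
    (huw : LinearIndependent ℝ ![u, w]) {a b : ι → ℝ} {s t : ℝ}
    (h : HasSum (fun i => a i • u + b i • w) (s • u + t • w)) : HasSum a s ∧ HasSum b t := by
  have : FiniteDimensional ℝ E := Module.finite_of_finrank_eq_succ hE
  let e := basisOfLinearIndependentOfCardEqFinrank huw (by simp [hE])
  have he : ∀ x y : ℝ, x • u + y • w = x • e 0 + y • e 1 := by
    simp [e, coe_basisOfLinearIndependentOfCardEqFinrank]
  simp only [he] at h
  exact ⟨by simpa using h.mapL (e.coord 0).toContinuousLinearMap,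
    by simpa using h.mapL (e.coord 1).toContinuousLinearMap⟩

theorem HasSum.smul_add_smul_succ_regroup {E : Type*} [NormedAddCommGroup E] [NormedSpace ℝ E]
    [CompleteSpace E] {w : ℕ → E} (hw : Summable fun i => ‖w (i + 1)‖) {a b : ℕ → ℝ}
    (hb : ∀ i, |b i| ≤ 1) {s : E} (h : HasSum (fun i => a i • w i + b i • w (i + 1)) s) :
    HasSum (fun i => (a (i + 1) + b i) • w (i + 1)) (s - a 0 • w 0) := by
  have hbw : Summable fun i => b i • w (i + 1) :=
    .of_norm_bounded hw fun i => by
      rw [norm_smul]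
      exact mul_le_of_le_one_left (norm_nonneg _) (hb i)
  simpa only [add_smul] using h.succ_add_of_summable hbw

theorem abs_le_mul_tsum_abs_of_hasSum_mul {c b : ℕ → ℝ} {C S : ℝ}
    (h : HasSum (fun i => c i * b i) S) (hc : ∀ i, |c i| ≤ C) (hb : Summable fun i => |b i|) :
    |S| ≤ C * ∑' i, |b i| := by
  rw [← h.tsum_eq, ← Real.norm_eq_abs]
  refine tsum_of_norm_bounded (hb.hasSum.mul_left C) fun i => ?_
  rw [Real.norm_eq_abs, abs_mul]
  exact mul_le_mul_of_nonneg_right (hc i) (abs_nonneg _)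

theorem Matrix.det_eq_of_charpoly_eq {R : Type*} [CommRing R] [Nontrivial R]
    {M : Matrix (Fin 2) (Fin 2) R} {a b : R} (h : M.charpoly = X ^ 2 + C a * X + C b) :
    M.det = b := by
  rw [det_eq_sign_charpoly_coeff, h]
  simp

namespace Matrix

variable {n R : Type*} [Fintype n] [DecidableEq n] [CommRing R] {M : Matrix n n R}

theorem mulVec_mulVec_self_of_charpoly_eq {a b : R} (h : M.charpoly = X ^ 2 + C a * X + C b)
    (x : n → R) : M *ᵥ (M *ᵥ x) = -(a • M *ᵥ x) - b • x := by
  have hCH := M.aeval_self_charpoly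
  rw [h] at hCH
  simp only [map_add, map_pow, aeval_X, map_mul, aeval_C, Algebra.algebraMap_eq_smul_one,
    Algebra.smul_mul_assoc, one_mul] at hCH
  have hsq : M ^ 2 = -(a • M) - b • 1 := by
    rw [← sub_eq_zero, ← hCH]
    abel
  rw [mulVec_mulVec, ← sq, hsq, sub_mulVec, neg_mulVec, smul_mulVec, smul_mulVec, one_mulVec]

theorem inv_pow_succ_mulVec_mulVec (hM : IsUnit M.det) (i : ℕ) (x : n → R) :
    M⁻¹ ^ (i + 1) *ᵥ (M *ᵥ x) = M⁻¹ ^ i *ᵥ x := by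
  rw [mulVec_mulVec, pow_succ, mul_assoc, nonsing_inv_mul M hM, mul_one]

theorem mulVec_inv_pow_succ_mulVec (hM : IsUnit M.det) (i : ℕ) (x : n → R) :
    M *ᵥ (M⁻¹ ^ (i + 1) *ᵥ x) = M⁻¹ ^ i *ᵥ x := by
  rw [mulVec_mulVec, pow_succ', ← mul_assoc, mul_nonsing_inv M hM, one_mul]

end Matrix

section Expansion

variable {n : Type*} [Fintype n] [DecidableEq n] {A : Matrix n n ℝ} (hA : IsUnit A.det) {p q : ℝ}
  (hchar : A.charpoly = X ^ 2 + C p * X + C q) {v : n → ℝ}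
  (hv : LinearIndependent ℝ ![v, A *ᵥ v]) {α β : ℕ → ℝ}
  (hαβ : ∀ i, 1 ≤ i → A⁻¹ ^ i *ᵥ v = α i • v + β i • (A *ᵥ v))
include hA hchar hv hαβ

theorem coeff_succ_eq_neg_mul_coeff_succ_succ (i : ℕ) : α (i + 1) = -q * β (i + 2) := by
  have h := mulVec_inv_pow_succ_mulVec hA (i + 1) v
  rw [hαβ (i + 2) (by omega), hαβ (i + 1) (by omega), mulVec_add, mulVec_smul, mulVec_smul,
    mulVec_mulVec_self_of_charpoly_eq hchar] at h
  have h' : (-q * β (i + 2)) • v + (α (i + 2) - p * β (i + 2)) • (A *ᵥ v) =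
      α (i + 1) • v + β (i + 1) • (A *ᵥ v) := by
    rw [← h]
    module
  exact (hv.eq_of_pair h').1.symm

theorem summable_norm_inv_pow_succ_mulVec (hβ : Summable fun i => |β (i + 1)|) :
    Summable fun i => ‖A⁻¹ ^ (i + 1) *ᵥ v‖ := by
  have hα : Summable fun i => |α (i + 1)| := by
    simp_rw [coeff_succ_eq_neg_mul_coeff_succ_succ hA hchar hv hαβ, abs_mul]
    exact ((summable_nat_add_iff 1).mpr hβ).mul_left _
  refine .of_nonneg_of_le (fun _ => norm_nonneg _) (fun i => ?_)
    ((hα.mul_right ‖v‖).add (hβ.mul_right ‖A *ᵥ v‖))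
  rw [hαβ (i + 1) (by omega)]
  refine (norm_add_le _ _).trans_eq ?_
  simp only [norm_smul, Real.norm_eq_abs]

theorem hasSum_coeffs_of_hasSum_inv_pow_mulVec (hn : Fintype.card n = 2)
    (hβ : Summable fun i => |β (i + 1)|) {a b : ℕ → ℝ} (hb : ∀ i, |b i| ≤ 1) {L K : ℝ}
    (h : HasSum (fun i => A⁻¹ ^ (i + 1) *ᵥ (a i • (A *ᵥ v) + b i • v)) (L • v + K • (A *ᵥ v))) :
    HasSum (fun i => (a (i + 1) + b i) * α (i + 1)) (L - a 0) ∧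
      HasSum (fun i => (a (i + 1) + b i) * β (i + 1)) K := by
  have hterm (i : ℕ) : A⁻¹ ^ (i + 1) *ᵥ (a i • (A *ᵥ v) + b i • v) =
      a i • (A⁻¹ ^ i *ᵥ v) + b i • (A⁻¹ ^ (i + 1) *ᵥ v) := by
    rw [mulVec_add, mulVec_smul, mulVec_smul, inv_pow_succ_mulVec_mulVec hA]
  simp_rw [hterm] at h
  have hreg := h.smul_add_smul_succ_regroup (w := fun i => A⁻¹ ^ i *ᵥ v)
    (summable_norm_inv_pow_succ_mulVec hA hchar hv hαβ hβ) hb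
  have hterms : (fun i => (a (i + 1) + b i) • (A⁻¹ ^ (i + 1) *ᵥ v)) = fun i =>
      ((a (i + 1) + b i) * α (i + 1)) • v + ((a (i + 1) + b i) * β (i + 1)) • (A *ᵥ v) := by
    ext1 i
    rw [hαβ (i + 1) (by omega)]
    module
  have hlim : L • v + K • (A *ᵥ v) - a 0 • (A⁻¹ ^ 0 *ᵥ v) = (L - a 0) • v + K • (A *ᵥ v) := by
    rw [pow_zero, one_mulVec]
    module
  rw [hterms, hlim] at hreg
  exact hreg.coeffs_of_linearIndependent_pair (by simp [hn]) hv

end Expansion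

theorem abs_le_of_mem_digit_diffs {k a b : ℤ} (h : (a, b) ∈
    ({(0, 0), (0, 1), (0, -1), (k, -1), (-k, 1), (k, 0), (-k, 0)} : Set (ℤ × ℤ))) :
    |a| ≤ |k| ∧ |b| ≤ 1 := by
  simp only [Set.mem_insert_iff, Set.mem_singleton_iff, Prod.mk.injEq] at h
  rcases h with ⟨rfl, rfl⟩ | ⟨rfl, rfl⟩ | ⟨rfl, rfl⟩ | ⟨rfl, rfl⟩ | ⟨rfl, rfl⟩ | ⟨rfl, rfl⟩ |
    ⟨rfl, rfl⟩ <;> simp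

theorem stmt12_general (A : Matrix (Fin 2) (Fin 2) ℝ)
    (p q : ℤ) (hq : q ≠ 0)
    (hchar : A.charpoly = X ^ 2 + C (p : ℝ) * X + C (q : ℝ))
    (v : Fin 2 → ℝ) (hv : LinearIndependent ℝ ![v, A *ᵥ v])
    (k : ℤ)
    (α β : ℕ → ℝ)
    (hαβ : ∀ i, 1 ≤ i → A⁻¹ ^ i *ᵥ v = α i • v + β i • (A *ᵥ v))
    (hβsum : Summable fun i : ℕ => |β (i + 1)|)
    (ks ls : ℕ → ℤ)
    (hd : ∀ i, (ks i, ls i) ∈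
      ({(0, 0), (0, 1), (0, -1), (k, -1), (-k, 1), (k, 0), (-k, 0)} : Set (ℤ × ℤ)))
    (L K : ℝ)
    (hsum : HasSum
      (fun i : ℕ => A⁻¹ ^ (i + 1) *ᵥ ((ks i : ℝ) • (A *ᵥ v) + (ls i : ℝ) • v))
      (L • v + K • (A *ᵥ v))) :
    HasSum (fun i : ℕ => ((ks (i + 1) + ls i : ℤ) : ℝ) * β (i + 1)) K ∧
    HasSum (fun i : ℕ => ((ks (i + 1) + ls i : ℤ) : ℝ) * α (i + 1)) (L - (ks 0 : ℝ)) ∧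
    |K| ≤ (1 + |(k : ℝ)|) * ∑' i : ℕ, |β (i + 1)| := by
  have hA : IsUnit A.det := by
    rw [det_eq_of_charpoly_eq hchar, isUnit_iff_ne_zero]
    exact_mod_cast hq
  have hks (i : ℕ) : |(ks i : ℝ)| ≤ |(k : ℝ)| := by
    exact_mod_cast (abs_le_of_mem_digit_diffs (hd i)).1
  have hls (i : ℕ) : |(ls i : ℝ)| ≤ 1 := by exact_mod_cast (abs_le_of_mem_digit_diffs (hd i)).2
  have hcoeff (i : ℕ) : |((ks (i + 1) + ls i : ℤ) : ℝ)| ≤ 1 + |(k : ℝ)| := by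
    push_cast
    linarith [abs_add_le (ks (i + 1) : ℝ) (ls i), hks (i + 1), hls i]
  obtain ⟨hα, hβ⟩ := hasSum_coeffs_of_hasSum_inv_pow_mulVec hA hchar hv hαβ
    (Fintype.card_fin 2) hβsum hls hsum
  push_cast
  exact ⟨hβ, hα, abs_le_mul_tsum_abs_of_hasSum_mul (by exact_mod_cast hβ) hcoeff hβsum⟩

theorem stmt12 (A : Matrix (Fin 2) (Fin 2) ℝ) (hint : IsIntMat A)
    (hexp : IsExpandingMat A) (p q : ℤ) (hq : q ≠ 0)
    (hchar : A.charpoly = X ^ 2 + C (p : ℝ) * X + C (q : ℝ))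
    (v : Fin 2 → ℝ) (hv : LinearIndependent ℝ ![v, A *ᵥ v])
    (k : ℤ) (hk : k ≠ 0)
    (α β : ℕ → ℝ)
    (hαβ : ∀ i, 1 ≤ i → A⁻¹ ^ i *ᵥ v = α i • v + β i • (A *ᵥ v))
    (hβsum : Summable fun i : ℕ => |β (i + 1)|)
    (ks ls : ℕ → ℤ)
    (hd : ∀ i, (ks i, ls i) ∈
      ({(0, 0), (0, 1), (0, -1), (k, -1), (-k, 1), (k, 0), (-k, 0)} : Set (ℤ × ℤ)))
    (L K : ℝ)
    (hsum : HasSum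
      (fun i : ℕ => A⁻¹ ^ (i + 1) *ᵥ ((ks i : ℝ) • (A *ᵥ v) + (ls i : ℝ) • v))
      (L • v + K • (A *ᵥ v))) :
    HasSum (fun i : ℕ => ((ks (i + 1) + ls i : ℤ) : ℝ) * β (i + 1)) K ∧
    HasSum (fun i : ℕ => ((ks (i + 1) + ls i : ℤ) : ℝ) * α (i + 1)) (L - (ks 0 : ℝ)) ∧
    |K| ≤ (1 + |(k : ℝ)|) * ∑' i : ℕ, |β (i + 1)| :=
  stmt12_general A p q hq hchar v hv k α β hαβ hβsum ks ls hd L K hsum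
end

section
/- Let A be an expanding 2×2 matrix with characteristic polynomial x² + 3x + 3 and v with {v, Av} linearly independent. Then (A − I)(A² + 3A + 3I) = 0 implies A² + A − I = 2(A + I)^{−1}, and hence v = A^{−2}(v − Av) + A^{−3}v + ∑_{i=0}^{∞} A^{−2i}(A^{−4}(Av − v) + A^{−5}(v − Av)), so v ∈ T − T for T = T(A, {0, v, Av}). -/
open Matrix Polynomial
open scoped Pointwise

/-!
Everything happens in the commutative ring `ℝ[A] ≅ ℝ[X]/(X² + 3X + 3)`, where `B = A⁻¹ = -(A + 3)/3`
is a root of `3X² + 3X + 1`; each identity reduces to a divisibility of polynomials.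
In particular `B⁶ = -1/27`, so `∑ Mⁱ dᵢ` converges absolutely for `M ∈ {B, -B, B²}` and bounded
digits, and the claimed sums are telescoping series `∑ Mⁱ (x - M x) = x`. Writing the digits
`eₙ ∈ D - D` of the expansion of `v` as differences of digits in `D` puts `v` in `T - T`.
-/

open Filter Topology

attribute [local instance] Matrix.linftyOpNormedRing Matrix.linftyOpNormedAlgebra

theorem summable_norm_pow_of_norm_pow_lt_one {R : Type*} [SeminormedRing R] [NormOneClass R]
    {x : R} {k : ℕ} (hk : k ≠ 0) (h : ‖x ^ k‖ < 1) : Summable fun n => ‖x ^ n‖ := by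
  have : NeZero k := ⟨hk⟩
  rw [← (Nat.divModEquiv k).symm.summable_iff]
  refine (summable_prod_of_nonneg fun _ => norm_nonneg _).2
    ⟨fun _ => (hasSum_fintype _).summable, ?_⟩
  refine Summable.of_nonneg_of_le (fun _ => tsum_nonneg fun _ => norm_nonneg _) (fun q => ?_)
    ((summable_geometric_of_lt_one (norm_nonneg _) h).mul_left (∑ j : Fin k, ‖x ^ (j : ℕ)‖))
  simp only [Nat.divModEquiv_symm_apply, tsum_fintype, Finset.sum_mul]
  gcongr with j
  calc ‖x ^ (q * k + j)‖ = ‖(x ^ k) ^ q * x ^ (j : ℕ)‖ := by rw [pow_add, mul_comm q, pow_mul]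
    _ ≤ ‖x ^ k‖ ^ q * ‖x ^ (j : ℕ)‖ :=
      (norm_mul_le _ _).trans (mul_le_mul_of_nonneg_right (norm_pow_le _ _) (norm_nonneg _))
    _ = _ := mul_comm _ _

section MatrixSeries

variable {ι n : Type*} [Fintype n] [DecidableEq n]

theorem summable_norm_mulVec_of_summable_norm {f : ι → Matrix n n ℝ}
    (hf : Summable fun i => ‖f i‖) {d : ι → n → ℝ} {K : ℝ} (hd : ∀ i, ‖d i‖ ≤ K) :
    Summable fun i => ‖f i *ᵥ d i‖ :=
  (hf.mul_right K).of_nonneg_of_le (fun _ => norm_nonneg _) fun i =>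
    (linfty_opNorm_mulVec _ _).trans (mul_le_mul_of_nonneg_left (hd i) (norm_nonneg _))

theorem hasSum_pow_mulVec_sub_mulVec {M : Matrix n n ℝ} (hM : Summable fun i => ‖M ^ i‖)
    (x : n → ℝ) : HasSum (fun i => M ^ i *ᵥ (x - M *ᵥ x)) x := by
  have hterm (i : ℕ) : M ^ i *ᵥ (x - M *ᵥ x) = M ^ i *ᵥ x - M ^ (i + 1) *ᵥ x := by
    rw [mulVec_sub, mulVec_mulVec, ← pow_succ]
  have hpow : Tendsto (fun i => M ^ i *ᵥ x) atTop (𝓝 0) :=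
    squeeze_zero_norm (fun i => linfty_opNorm_mulVec _ _)
      (by simpa using hM.tendsto_atTop_zero.mul_const ‖x‖)
  rw [hasSum_iff_tendsto_nat_of_summable_norm
    (summable_norm_mulVec_of_summable_norm hM fun _ => le_rfl)]
  simp_rw [hterm, Finset.sum_range_sub']
  simpa using tendsto_const_nhds.sub hpow

end MatrixSeries

theorem mem_selfAffine_sub_selfAffine {A : Matrix (Fin 2) (Fin 2) ℝ}
    (hA : Summable fun i => ‖A⁻¹ ^ i‖) {D : Set (Fin 2 → ℝ)} (hD : Bornology.IsBounded D)
    {e : ℕ → Fin 2 → ℝ} (he : ∀ n, e n ∈ D - D) {x : Fin 2 → ℝ}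
    (hx : HasSum (fun n => A⁻¹ ^ (n + 1) *ᵥ e n) x) :
    x ∈ selfAffine A D - selfAffine A D := by
  choose d₁ hd₁ d₂ hd₂ hd using he
  obtain ⟨K, hK⟩ := isBounded_iff_forall_norm_le.1 hD
  have hsum {d : ℕ → Fin 2 → ℝ} (hd : ∀ n, d n ∈ D) :
      Summable fun n => A⁻¹ ^ (n + 1) *ᵥ d n :=
    (summable_norm_mulVec_of_summable_norm ((summable_nat_add_iff 1).2 hA)
      fun n => hK _ (hd n)).of_norm
  refine ⟨_, ⟨d₁, hd₁, (hsum hd₁).hasSum⟩, _, ⟨d₂, hd₂, (hsum hd₂).hasSum⟩, ?_⟩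
  refine ((hsum hd₁).hasSum.sub (hsum hd₂).hasSum).unique ?_
  simpa only [← mulVec_sub, hd] using hx

section Digits

variable {E : Type*} [AddCommGroup E] [Module ℝ E]

-- The digits of `v = ∑ A^{-(n+1)} eₙ` with `u = A v`; the alternating tail makes
-- `∑_{n ≥ 3}` a geometric series in `-A⁻¹`.
def diffDigits (v u : E) : ℕ → E
  | 0 => 0
  | 1 => v - u
  | 2 => v
  | n + 3 => (-1 : ℝ) ^ n • (u - v)

theorem diffDigits_mem (v u : E) (n : ℕ) :
    diffDigits v u n ∈ ({0, v, u} : Set E) - {0, v, u} := by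
  match n with
  | 0 => exact ⟨0, by simp, 0, by simp, sub_zero 0⟩
  | 1 => exact ⟨v, by simp, u, by simp, rfl⟩
  | 2 => exact ⟨v, by simp, 0, by simp, sub_zero v⟩
  | n + 3 =>
    rcases neg_one_pow_eq_or ℝ n with h | h
    · exact ⟨u, by simp, v, by simp, by simp [diffDigits, h]⟩
    · exact ⟨v, by simp, u, by simp, by simp [diffDigits, h]⟩

end Digits

section GeometricTail

variable {n : Type*} [Fintype n] [DecidableEq n] {M : Matrix n n ℝ} {x v u : n → ℝ}

theorem hasSum_pow_succ_mulVec_diffDigits (hM : Summable fun i => ‖(-M) ^ i‖)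
    (hx : (1 + M) *ᵥ x = M ^ 4 *ᵥ (u - v)) :
    HasSum (fun i => M ^ (i + 1) *ᵥ diffDigits v u i)
      (x + (M ^ 2 *ᵥ (v - u) + M ^ 3 *ᵥ v)) := by
  refine (hasSum_nat_add_iff' 3).1 ?_
  have hx' : x - -M *ᵥ x = M ^ 4 *ᵥ (u - v) := by
    rw [neg_mulVec, sub_neg_eq_add, ← hx, add_mulVec, one_mulVec]
  have hval : x + (M ^ 2 *ᵥ (v - u) + M ^ 3 *ᵥ v) -
      ∑ i ∈ Finset.range 3, M ^ (i + 1) *ᵥ diffDigits v u i = x := by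
    simp [Finset.sum_range_succ, diffDigits]
  rw [hval]
  refine (hasSum_pow_mulVec_sub_mulVec hM x).congr_fun fun i => ?_
  rw [hx', mulVec_mulVec, ← neg_one_smul ℝ M, _root_.smul_pow, smul_mul_assoc, ← pow_add,
    smul_mulVec]
  simp only [diffDigits, mulVec_smul]

theorem hasSum_pow_two_mul_mulVec (hM : Summable fun i => ‖(M ^ 2) ^ i‖)
    (hx : (1 + M) *ᵥ x = M ^ 4 *ᵥ (u - v)) :
    HasSum (fun i => M ^ (2 * i) *ᵥ (M ^ 4 *ᵥ (u - v) + M ^ 5 *ᵥ (v - u))) x := by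
  have hw : x - M ^ 2 *ᵥ x = M ^ 4 *ᵥ (u - v) + M ^ 5 *ᵥ (v - u) := by
    calc x - M ^ 2 *ᵥ x = (1 + M) *ᵥ x - M *ᵥ ((1 + M) *ᵥ x) := by
          simp only [add_mulVec, one_mulVec, mulVec_add, mulVec_mulVec, sq]; abel
      _ = _ := by
          rw [hx, mulVec_mulVec, ← pow_succ', ← neg_sub u v, mulVec_neg, sub_eq_add_neg]
  simpa only [pow_mul, hw] using hasSum_pow_mulVec_sub_mulVec hM x

end GeometricTail

section InverseRelation

variable {n : Type*} [Fintype n] [DecidableEq n] {B : Matrix n n ℝ}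

-- The roots of `3X² + 3X + 1` are `e^{±5πi/6}/√3`, whose sixth powers are both `-1/27`.
theorem norm_pow_six_lt_one [Nonempty n] (hB : aeval B (3 * X ^ 2 + 3 * X + 1 : ℝ[X]) = 0) :
    ‖B ^ 6‖ < 1 := by
  have h := aeval_eq_zero_of_dvd_aeval_eq_zero (q := C 27 * X ^ 6 + 1)
    ⟨9 * X ^ 4 - 9 * X ^ 3 + 6 * X ^ 2 - 3 * X + 1, by simp only [map_ofNat]; ring⟩ hB
  simp only [map_add, map_mul, aeval_C, aeval_X_pow, map_one, ← Algebra.smul_def] at h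
  have h27 : 27 * ‖B ^ 6‖ = 1 := by
    calc 27 * ‖B ^ 6‖ = ‖(27 : ℝ) • B ^ 6‖ := by rw [norm_smul]; norm_num
      _ = 1 := by rw [eq_neg_of_add_eq_zero_left h, norm_neg, norm_one]
  linarith

theorem one_add_mulVec_eq_pow_four_mulVec (hB : aeval B (3 * X ^ 2 + 3 * X + 1 : ℝ[X]) = 0)
    {A : Matrix n n ℝ} (hAB : A = -3 * B - 3) (v : n → ℝ) :
    (1 + B) *ᵥ (v - (B ^ 2 *ᵥ (v - A *ᵥ v) + B ^ 3 *ᵥ v)) = B ^ 4 *ᵥ (A *ᵥ v - v) := by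
  have h := aeval_eq_zero_of_dvd_aeval_eq_zero
    (q := (1 + X) * (1 - X ^ 2 * (1 - (-3 * X - 3)) - X ^ 3) - X ^ 4 * ((-3 * X - 3) - 1))
    ⟨X ^ 3 - X ^ 2 - 2 * X + 1, by ring⟩ hB
  simp only [map_add, map_mul, map_sub, map_neg, aeval_X, aeval_X_pow, map_one, map_ofNat, ← hAB,
    sub_eq_zero] at h
  have hx : v - (B ^ 2 *ᵥ (v - A *ᵥ v) + B ^ 3 *ᵥ v) =
      (1 - B ^ 2 * (1 - A) - B ^ 3) *ᵥ v := by
    simp only [sub_mulVec, mulVec_sub, one_mulVec, mul_sub, mul_one, mulVec_mulVec]; abel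
  rw [hx, mulVec_mulVec, h, ← mulVec_mulVec, sub_mulVec, one_mulVec]

end InverseRelation

section Charpoly

variable {n : Type*} [Fintype n] [DecidableEq n] {A : Matrix n n ℝ}

theorem aeval_eq_zero_of_dvd_of_charpoly (hchar : A.charpoly = X ^ 2 + C (3 : ℝ) * X + C 3)
    {p : ℝ[X]} (hp : X ^ 2 + 3 * X + 3 ∣ p) : aeval A p = 0 := by
  refine aeval_eq_zero_of_dvd_aeval_eq_zero hp ?_
  simpa only [hchar, map_ofNat] using aeval_self_charpoly A

theorem isUnit_det_of_charpoly (hchar : A.charpoly = X ^ 2 + C (3 : ℝ) * X + C 3) :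
    IsUnit A.det := by
  rw [det_eq_sign_charpoly_coeff, hchar]
  simp

theorem add_three_add_three_mul_inv_eq_zero_of_charpoly
    (hchar : A.charpoly = X ^ 2 + C (3 : ℝ) * X + C 3) : A + 3 + 3 * A⁻¹ = 0 := by
  have h := aeval_eq_zero_of_dvd_of_charpoly hchar (p := X * (X + 3) + 3) ⟨1, by ring⟩
  simp only [map_add, map_mul, aeval_X, map_ofNat] at h
  simpa only [mul_add, nonsing_inv_mul_cancel_left _ _ (isUnit_det_of_charpoly hchar),
    (Commute.ofNat_right A⁻¹ 3).eq, mul_zero] using congrArg (A⁻¹ * ·) h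

theorem eq_neg_three_mul_inv_sub_three_of_charpoly
    (hchar : A.charpoly = X ^ 2 + C (3 : ℝ) * X + C 3) : A = -3 * A⁻¹ - 3 := by
  rw [neg_mul, eq_sub_iff_add_eq,
    eq_neg_of_add_eq_zero_left (add_three_add_three_mul_inv_eq_zero_of_charpoly hchar)]

theorem aeval_inv_eq_zero_of_charpoly (hchar : A.charpoly = X ^ 2 + C (3 : ℝ) * X + C 3) :
    aeval A⁻¹ (3 * X ^ 2 + 3 * X + 1 : ℝ[X]) = 0 := by
  have hBA : A⁻¹ * A = 1 := nonsing_inv_mul A (isUnit_det_of_charpoly hchar)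
  calc aeval A⁻¹ (3 * X ^ 2 + 3 * X + 1 : ℝ[X]) = A⁻¹ * (A + 3 + 3 * A⁻¹) := by
        simp only [map_add, map_mul, aeval_X, map_ofNat, map_one, mul_add, hBA,
          (Commute.ofNat_right A⁻¹ 3).eq, ← mul_assoc, sq]
        abel
    _ = 0 := by rw [add_three_add_three_mul_inv_eq_zero_of_charpoly hchar, mul_zero]

theorem inv_add_one_of_charpoly (hchar : A.charpoly = X ^ 2 + C (3 : ℝ) * X + C 3) :
    (A + 1)⁻¹ = -A - 2 := by
  refine inv_eq_right_inv ?_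
  have h := aeval_eq_zero_of_dvd_of_charpoly hchar (p := (X + 1) * (-X - 2) - 1) ⟨-1, by ring⟩
  simpa only [map_add, map_mul, map_sub, map_neg, aeval_X, map_one, map_ofNat, sub_eq_zero]
    using h

theorem mul_self_add_sub_one_eq_two_smul_inv_add_one
    (hchar : A.charpoly = X ^ 2 + C (3 : ℝ) * X + C 3) :
    A * A + A - 1 = (2 : ℝ) • (A + 1)⁻¹ := by
  have h := aeval_eq_zero_of_dvd_of_charpoly hchar
    (p := X * X + X - 1 - 2 * (-X - 2)) ⟨1, by ring⟩
  simp only [map_add, map_mul, map_sub, map_neg, aeval_X, map_one, map_ofNat, sub_eq_zero] at h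
  rw [inv_add_one_of_charpoly hchar, h, two_smul, two_mul]

end Charpoly

theorem stmt19_general (A : Matrix (Fin 2) (Fin 2) ℝ)
    (hchar : A.charpoly = X ^ 2 + C (3 : ℝ) * X + C 3)
    (v : Fin 2 → ℝ)
    (T : Set (Fin 2 → ℝ)) (hT : T = selfAffine A {0, v, A *ᵥ v}) :
    (A - 1) * (A * A + (3 : ℝ) • A + (3 : ℝ) • (1 : Matrix (Fin 2) (Fin 2) ℝ)) = 0 ∧
    A * A + A - 1 = (2 : ℝ) • (A + 1)⁻¹ ∧
    HasSum (fun i : ℕ => A⁻¹ ^ (2 * i) *ᵥ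
        (A⁻¹ ^ 4 *ᵥ (A *ᵥ v - v) + A⁻¹ ^ 5 *ᵥ (v - A *ᵥ v)))
      (v - (A⁻¹ ^ 2 *ᵥ (v - A *ᵥ v) + A⁻¹ ^ 3 *ᵥ v)) ∧
    v ∈ T - T := by
  have hB := aeval_inv_eq_zero_of_charpoly hchar
  have hsum {M : Matrix (Fin 2) (Fin 2) ℝ} {k : ℕ} (hk : k ≠ 0) (hM : M ^ k = A⁻¹ ^ 6) :
      Summable fun i => ‖M ^ i‖ :=
    summable_norm_pow_of_norm_pow_lt_one hk (hM ▸ norm_pow_six_lt_one hB)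
  have hx := one_add_mulVec_eq_pow_four_mulVec hB
    (eq_neg_three_mul_inv_sub_three_of_charpoly hchar) v
  refine ⟨?_, mul_self_add_sub_one_eq_two_smul_inv_add_one hchar,
    hasSum_pow_two_mul_mulVec (hsum three_ne_zero (pow_mul _ _ _).symm) hx, ?_⟩
  · have h := aeval_eq_zero_of_dvd_of_charpoly hchar (p := (X - 1) * (X * X + 3 * X + 3))
      (dvd_mul_of_dvd_right (by rw [sq]) _)
    simpa only [map_mul, map_sub, map_add, aeval_X, map_one, map_ofNat, Algebra.smul_def,
      mul_one] using h
  · have hdigits := hasSum_pow_succ_mulVec_diffDigits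
      (hsum (k := 6) (by norm_num) (Even.neg_pow ⟨3, rfl⟩ _)) hx
    rw [sub_add_cancel] at hdigits
    exact hT ▸ mem_selfAffine_sub_selfAffine (hsum (by norm_num) rfl)
      (Set.toFinite _).isBounded (diffDigits_mem v _) hdigits

theorem stmt19 (A : Matrix (Fin 2) (Fin 2) ℝ) (hexp : IsExpandingMat A)
    (hchar : A.charpoly = X ^ 2 + C (3 : ℝ) * X + C 3)
    (v : Fin 2 → ℝ) (hv : LinearIndependent ℝ ![v, A *ᵥ v])
    (T : Set (Fin 2 → ℝ)) (hT : T = selfAffine A {0, v, A *ᵥ v}) :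
    (A - 1) * (A * A + (3 : ℝ) • A + (3 : ℝ) • (1 : Matrix (Fin 2) (Fin 2) ℝ)) = 0 ∧
    A * A + A - 1 = (2 : ℝ) • (A + 1)⁻¹ ∧
    HasSum (fun i : ℕ => A⁻¹ ^ (2 * i) *ᵥ
        (A⁻¹ ^ 4 *ᵥ (A *ᵥ v - v) + A⁻¹ ^ 5 *ᵥ (v - A *ᵥ v)))
      (v - (A⁻¹ ^ 2 *ᵥ (v - A *ᵥ v) + A⁻¹ ^ 3 *ᵥ v)) ∧
    v ∈ T - T :=
  stmt19_general A hchar v T hT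
end
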